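/- arXiv:2204.04821 — 4 statements merged into one kernel-verified Lean document; each statement's English description precedes it below -/
import Mathlib

section
/- Let V be a finite set of discrete random variables with a positive joint distribution P, and G a DAG over V. If for every variable X ∈ V, P(X | nd(X)) = P(X | pa_G(X)) (the local Markov condition), then P factorizes according to G: P(V) = ∏_{X∈V} P(X | pa_G(X)). -/
/-!
Induct over ancestral sets `U` (closed under taking parents), proving
`P(U) = ∏_{i ∈ U} P(i ∣ pa i)`. A nonempty ancestral set has a sink `i`, one with no
descendant in `U`; then `pa i ⊆ U \ {i} ⊆ nd i`, and summing the local Markov identity over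
the variables of `nd i` outside `U` gives `P(i ∣ U \ {i}) = P(i ∣ pa i)`, so the chain rule
`P(U) = P(i ∣ U \ {i}) P(U \ {i})` completes the induction step. For `U = V` this is the
factorization.
-/

open scoped Classical
open Finset

variable {ι : Type*} [Fintype ι] [DecidableEq ι] {val : ι → Type*} [∀ i, Fintype (val i)]

/-- The marginal probability `P(S = ω|S)`: the total probability of all full assignments
agreeing with `ω` on `S`. -/
noncomputable def marg (P : (∀ i, val i) → ℝ) (S : Finset ι) (ω : ∀ i, val i) : ℝ :=
  ∑ ω' : ∀ i, val i, if ∀ i ∈ S, ω' i = ω i then P ω' else 0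

/-- The conditional probability `P(S = ω|S ∣ T = ω|T)`, defined as a ratio of marginals. -/
noncomputable def pcond (P : (∀ i, val i) → ℝ) (S T : Finset ι) (ω : ∀ i, val i) : ℝ :=
  marg P (S ∪ T) ω / marg P T ω

/-- The parents of `i` in the graph with edge relation `E`. -/
noncomputable def pa (E : ι → ι → Prop) (i : ι) : Finset ι :=
  Finset.univ.filter fun j => E j i

/-- The non-descendants of `i` (other than `i`): vertices `j ≠ i` such that `i` is not an
ancestor of `j`. -/
noncomputable def nd (E : ι → ι → Prop) (i : ι) : Finset ι :=
  Finset.univ.filter fun j => j ≠ i ∧ ¬ Relation.ReflTransGen E i j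

section Marginal

variable (P : (∀ i, val i) → ℝ)

lemma marg_congr {S : Finset ι} {ω ω' : ∀ i, val i} (h : ∀ i ∈ S, ω i = ω' i) :
    marg P S ω = marg P S ω' := by
  unfold marg
  refine sum_congr rfl fun τ _ => if_congr ?_ rfl rfl
  exact forall₂_congr fun i hi => by rw [h i hi]

lemma marg_pos (hpos : ∀ ω, 0 < P ω) (S : Finset ι) (ω : ∀ i, val i) : 0 < marg P S ω := by
  refine sum_pos' (fun τ _ => ?_) ⟨ω, mem_univ ω, by simp [hpos ω]⟩
  split_ifs
  exacts [(hpos τ).le, le_rfl]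

lemma marg_empty (ω : ∀ i, val i) : marg P ∅ ω = ∑ τ, P τ := by
  simp [marg]

lemma marg_univ (ω : ∀ i, val i) : marg P univ ω = P ω := by
  rw [marg, sum_eq_single_of_mem ω (mem_univ ω)]
  · simp
  · intro τ _ hτ
    exact if_neg fun h => hτ (funext fun i => h i (mem_univ i))

/-- The law of total probability; `ρ` runs over the extensions of `ω|S` to `T`. -/
lemma marg_eq_sum_marg {S T : Finset ι} (hST : S ⊆ T) (ω : ∀ i, val i) :
    marg P S ω = ∑ ρ with ∀ j ∉ T \ S, ρ j = ω j, marg P T ρ := by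
  unfold marg
  rw [sum_comm]
  refine sum_congr rfl fun τ _ => ?_
  by_cases hτ : ∀ j ∈ S, τ j = ω j
  · have hmem : T.piecewise τ ω ∈ ({ρ | ∀ j ∉ T \ S, ρ j = ω j} : Finset _) := by
      simp only [mem_filter, mem_univ, true_and, mem_sdiff, not_and_or, not_not]
      rintro j (hj | hj)
      · simp [hj]
      · by_cases hjT : j ∈ T
        · simp [hjT, hτ j hj]
        · simp [hjT]
    rw [if_pos hτ, sum_eq_single_of_mem _ hmem, if_pos fun j hj => by simp [hj]]
    intro ρ hρ hne
    refine if_neg fun h => hne (funext fun j => ?_)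
    by_cases hjT : j ∈ T
    · simp [hjT, h j hjT]
    · simp only [mem_filter, mem_univ, true_and] at hρ
      simp [hjT, hρ j fun hj => hjT (mem_sdiff.1 hj).1]
  · rw [if_neg hτ]
    refine (sum_eq_zero fun ρ hρ => ?_).symm
    refine if_neg fun h => hτ fun j hj => ?_
    simp only [mem_filter, mem_univ, true_and] at hρ
    rw [h j (hST hj), hρ j fun hj' => (mem_sdiff.1 hj').2 hj]

lemma marg_union_eq_pcond_mul (hpos : ∀ ω, 0 < P ω) (S T : Finset ι) (ω : ∀ i, val i) :
    marg P (S ∪ T) ω = pcond P S T ω * marg P T ω :=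
  (div_mul_cancel₀ _ (marg_pos P hpos T ω).ne').symm

/-- Decomposition and weak union at once: if `X ⊥ N \ A ∣ A`, then `X ⊥ S \ A ∣ A` for every
`A ⊆ S ⊆ N`. -/
lemma pcond_eq_of_subset_of_subset (hpos : ∀ ω, 0 < P ω) {X A S N : Finset ι}
    (hXN : Disjoint X N) (hAS : A ⊆ S) (hSN : S ⊆ N)
    (hXA : ∀ τ, pcond P X N τ = pcond P X A τ) (ω : ∀ i, val i) :
    pcond P X S ω = pcond P X A ω := by
  set r := pcond P X A ω
  have hfactor : ∀ ρ : ∀ i, val i, (∀ j ∉ N \ S, ρ j = ω j) →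
      marg P (X ∪ N) ρ = r * marg P N ρ := by
    intro ρ hρ
    have hagree : ∀ j ∈ X ∪ A, ρ j = ω j := by
      intro j hj
      refine hρ j fun hj' => ?_
      rcases mem_union.1 hj with hjX | hjA
      · exact disjoint_left.1 hXN hjX (mem_sdiff.1 hj').1
      · exact (mem_sdiff.1 hj').2 (hAS hjA)
    have hr : pcond P X A ρ = r := by
      unfold r pcond
      rw [marg_congr P hagree,
        marg_congr P fun j hj => hagree j (mem_union_right X hj)]
    rw [marg_union_eq_pcond_mul P hpos, hXA, hr]
  have hdiff : (X ∪ N) \ (X ∪ S) = N \ S := by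
    ext j
    have : j ∈ X → j ∉ N := fun hj => disjoint_left.1 hXN hj
    simp only [mem_sdiff, mem_union]
    tauto
  calc pcond P X S ω
      = (∑ ρ with ∀ j ∉ N \ S, ρ j = ω j, marg P (X ∪ N) ρ) / marg P S ω := by
        rw [pcond, marg_eq_sum_marg P (union_subset_union_right hSN), hdiff]
    _ = r * marg P S ω / marg P S ω := by
        rw [sum_congr rfl fun ρ hρ => hfactor ρ (mem_filter.1 hρ).2, ← mul_sum,
          ← marg_eq_sum_marg P hSN]
    _ = r := mul_div_cancel_right₀ r (marg_pos P hpos S ω).ne'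

end Marginal

lemma exists_mem_forall_not_transGen {α : Type*} [Finite α] {r : α → α → Prop}
    (hacyc : ∀ a, ¬ Relation.TransGen r a a) {U : Finset α} (hU : U.Nonempty) :
    ∃ a ∈ U, ∀ b ∈ U, ¬ Relation.TransGen r a b := by
  let descendant : α → α → Prop := fun a b => Relation.TransGen r b a
  have : IsTrans α descendant := ⟨fun _ _ _ h₁ h₂ => h₂.trans h₁⟩
  have : Std.Irrefl descendant := ⟨hacyc⟩
  obtain ⟨i, hi, hmin⟩ :=
    (Finite.wellFounded_of_trans_of_irrefl descendant).has_min (U : Set α) hU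
  exact ⟨i, hi, fun j hj => hmin j hj⟩

section Ancestral

variable {E : ι → ι → Prop}

def IsAncestral (E : ι → ι → Prop) (U : Finset ι) : Prop :=
  ∀ i ∈ U, pa E i ⊆ U

lemma pa_subset_erase (hacyc : ∀ i, ¬ Relation.TransGen E i i) {U : Finset ι}
    (hU : IsAncestral E U) {i : ι} (hi : i ∈ U) : pa E i ⊆ U.erase i := by
  intro j hj
  refine mem_erase.2 ⟨?_, hU i hi hj⟩
  rintro rfl
  exact hacyc j (.single (mem_filter.1 hj).2)

lemma erase_subset_nd {U : Finset ι} {i : ι} (hsink : ∀ j ∈ U, ¬ Relation.TransGen E i j) :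
    U.erase i ⊆ nd E i := by
  intro j hj
  obtain ⟨hji, hjU⟩ := mem_erase.1 hj
  refine mem_filter.2 ⟨mem_univ j, hji, fun hij => ?_⟩
  rcases Relation.reflTransGen_iff_eq_or_transGen.1 hij with rfl | hij
  exacts [hji rfl, hsink j hjU hij]

lemma IsAncestral.erase {U : Finset ι} (hU : IsAncestral E U) {i : ι}
    (hsink : ∀ j ∈ U, ¬ Relation.TransGen E i j) : IsAncestral E (U.erase i) := by
  intro j hj k hk
  obtain ⟨-, hjU⟩ := mem_erase.1 hj
  refine mem_erase.2 ⟨?_, hU j hjU hk⟩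
  rintro rfl
  exact hsink j hjU (.single (mem_filter.1 hk).2)

end Ancestral

lemma marg_eq_prod_pcond_of_isAncestral {E : ι → ι → Prop}
    (hacyc : ∀ i, ¬ Relation.TransGen E i i)
    {P : (∀ i, val i) → ℝ} (hpos : ∀ ω, 0 < P ω) (hsum : ∑ ω, P ω = 1)
    (hlm : ∀ (i : ι) (ω : ∀ i, val i), pcond P {i} (nd E i) ω = pcond P {i} (pa E i) ω)
    {U : Finset ι} (hU : IsAncestral E U) (ω : ∀ i, val i) :
    marg P U ω = ∏ i ∈ U, pcond P {i} (pa E i) ω := by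
  induction U using Finset.strongInduction with
  | H U ih =>
    rcases U.eq_empty_or_nonempty with rfl | hne
    · rw [marg_empty, hsum, prod_empty]
    obtain ⟨i, hiU, hsink⟩ := exists_mem_forall_not_transGen hacyc hne
    have hcond : pcond P {i} (U.erase i) ω = pcond P {i} (pa E i) ω :=
      pcond_eq_of_subset_of_subset P hpos (by simp [nd]) (pa_subset_erase hacyc hU hiU)
        (erase_subset_nd hsink) (hlm i) ω
    calc marg P U ω
        = marg P ({i} ∪ U.erase i) ω := by rw [← insert_eq, insert_erase hiU]
      _ = pcond P {i} (pa E i) ω * marg P (U.erase i) ω := by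
          rw [marg_union_eq_pcond_mul P hpos, hcond]
      _ = ∏ j ∈ U, pcond P {j} (pa E j) ω := by
          rw [ih _ (erase_ssubset hiU) (hU.erase hsink),
            mul_prod_erase U (fun j => pcond P {j} (pa E j) ω) hiU]

/-- If a positive joint distribution `P` over finitely many finite-valued variables
satisfies the local Markov condition `P(X ∣ nd(X)) = P(X ∣ pa(X))` with respect to a DAG
`G`, then `P` factorizes according to `G`. -/
theorem factorization_of_local_markov (E : ι → ι → Prop)
    (hacyc : ∀ i, ¬ Relation.TransGen E i i)
    (P : (∀ i, val i) → ℝ) (hpos : ∀ ω, 0 < P ω) (hsum : ∑ ω, P ω = 1)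
    (hlm : ∀ (i : ι) (ω : ∀ i, val i), pcond P {i} (nd E i) ω = pcond P {i} (pa E i) ω) :
    ∀ ω, P ω = ∏ i, pcond P {i} (pa E i) ω := fun ω =>
  (marg_univ P ω).symm.trans <|
    marg_eq_prod_pcond_of_isAncestral hacyc hpos hsum hlm (fun _ _ => subset_univ _) ω
end

section
/- Let G be a DAG over a finite set of finite-valued random variables V, and suppose for every subset T ⊆ V and every value assignment t a positive-where-consistent interventional distribution P(V | do(T=t)) is given by the truncated factorization (intervention principle). Then Rule 3 of the do-calculus holds in the specialized form: for disjoint sets X, Z, Y ⊆ V, if Z is forward-t-separated from Y by X in G, then P(Y | do(X=x), do(Z=z)) = P(Y | do(X=x)) for all values x, z. -/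
open scoped Classical
open Finset

variable {ι : Type*} [Fintype ι] [DecidableEq ι] {val : ι → Type*} [∀ i, Fintype (val i)]

variable {V : Type*}

/-- `p` is (the list of vertices of) a directed path from `i` to `j` in the graph with
edge relation `E`: consecutive vertices are joined by edges, and the path has at least
one edge. -/
def IsDirPath (E : V → V → Prop) (p : List V) (i j : V) : Prop :=
  p.Chain' E ∧ p.head? = some i ∧ p.getLast? = some j ∧ 2 ≤ p.length

/-- The graph is acyclic: no directed cycle. -/
def Acyclic (E : V → V → Prop) : Prop := ∀ v, ¬ Relation.TransGen E v v

/-- `v` is an ancestor of `w`: `v = w` or there is a directed path from `v` to `w`. -/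
def Ancestor (E : V → V → Prop) (v w : V) : Prop := Relation.ReflTransGen E v w

/-- A forward trek from `i` to `j` is a directed path from `i` to `j`; `p` lists its vertices. -/
def IsFwdTrek (E : V → V → Prop) (p : List V) (i j : V) : Prop := IsDirPath E p i j

/-- A backward trek from `i` to `j` is a directed path from `j` to `i`, or a union of two
directed paths from a common vertex `k` (distinct from `i` and `j`) to `i` and to `j`,
disjoint except at `k`; `p` lists its vertices. -/
def IsBwdTrek (E : V → V → Prop) (p : List V) (i j : V) : Prop :=
  IsDirPath E p j i ∨
    ∃ (k : V) (q r : List V), k ≠ i ∧ k ≠ j ∧ IsDirPath E q k i ∧ IsDirPath E r k j ∧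
      (∀ x, x ∈ q → x ∈ r → x = k) ∧ p = q ++ r

/-- A proper forward trek from `X` to `Y`: a forward trek from some `i ∈ X` to some `j ∈ Y`
containing no vertex of `X ∪ Y` other than `i` and `j`. -/
def ProperFwdTrek (E : V → V → Prop) (X Y : Set V) (p : List V) : Prop :=
  ∃ i ∈ X, ∃ j ∈ Y, IsFwdTrek E p i j ∧ ∀ x ∈ p, x ∈ X ∪ Y → x = i ∨ x = j

/-- A proper backward trek from `X` to `Y`. -/
def ProperBwdTrek (E : V → V → Prop) (X Y : Set V) (p : List V) : Prop :=
  ∃ i ∈ X, ∃ j ∈ Y, IsBwdTrek E p i j ∧ ∀ x ∈ p, x ∈ X ∪ Y → x = i ∨ x = j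

/-- `X` is forward-t-separated from `Y` by `Z`: every proper forward trek from `X` to `Y`
contains a vertex of `Z`. -/
def FwdTSep (E : V → V → Prop) (X Y Z : Set V) : Prop :=
  ∀ p, ProperFwdTrek E X Y p → ∃ z ∈ Z, z ∈ p

/-- `X` is backward-t-separated from `Y` by `Z`: every proper backward trek from `X` to `Y`
contains a vertex of `Z`. -/
def BwdTSep (E : V → V → Prop) (X Y Z : Set V) : Prop :=
  ∀ p, ProperBwdTrek E X Y p → ∃ z ∈ Z, z ∈ p

/-- `X` and `Y` are t-separated by `Z`: both forward- and backward-t-separation hold. -/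
def TSep (E : V → V → Prop) (X Y Z : Set V) : Prop :=
  FwdTSep E X Y Z ∧ BwdTSep E X Y Z

/-- The interventional distribution given by the truncated factorization (intervention
principle): `P(V ∣ do(T = t))` equals the product of the conditional tables `θ i` over the
non-intervened variables on assignments consistent with `t`, and `0` otherwise. -/
noncomputable def Pdo (θ : ι → (∀ i, val i) → ℝ) (T : Finset ι) (t : ∀ i, val i)
    (ω : ∀ i, val i) : ℝ :=
  if ∀ i ∈ T, ω i = t i then ∏ i ∈ Tᶜ, θ i ω else 0

set_option linter.unusedSectionVars false


lemma exists_sink (E : ι → ι → Prop) (hacyc : Acyclic E) (A : Finset ι) (hA : A.Nonempty) :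
    ∃ m ∈ A, ∀ j ∈ A, ¬ E m j := by
  haveI : IsTrans ι (fun a b : ι => Relation.TransGen E b a) :=
    ⟨fun a b c h1 h2 => h2.trans h1⟩
  haveI : IsIrrefl ι (fun a b : ι => Relation.TransGen E b a) := ⟨fun a h => hacyc a h⟩
  have hwf : WellFounded (fun a b : ι => Relation.TransGen E b a) :=
    Finite.wellFounded_of_trans_of_irrefl _
  obtain ⟨a, ha⟩ := hA
  obtain ⟨m, hm, hmin⟩ := hwf.has_min (↑A : Set ι) ⟨a, ha⟩
  exact ⟨m, hm, fun j hj hEj => hmin j hj (Relation.TransGen.single hEj)⟩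

lemma split_coord (m : ι) (c : val m) (f : (∀ i, val i) → ℝ) :
    ∑ ω' : ∀ i, val i, f ω'
      = ∑ b : ∀ i, val i, ∑ v : val m,
          if b m = c then f (Function.update b m v) else 0 := by
  have h1 := Finset.sum_product' (Finset.univ : Finset (∀ i, val i))
    (Finset.univ : Finset (val m))
    (fun b v => if b m = c then f (Function.update b m v) else 0)
  rw [← h1, ← Finset.sum_filter]
  refine Finset.sum_nbij' (fun ω' => (Function.update ω' m c, ω' m))
    (fun p => Function.update p.1 m p.2)
    (fun a _ => by simp) (fun p _ => by simp)
    (fun a _ => by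
      simp only
      rw [Function.update_idem, Function.update_eq_self])
    (fun p hp => by
      simp only [Finset.mem_filter] at hp
      ext1
      · simp only
        rw [Function.update_idem, ← hp.2, Function.update_eq_self]
      · simp)
    (fun a _ => by
      simp only
      rw [Function.update_idem, Function.update_eq_self])

lemma telescope (E : ι → ι → Prop) (hacyc : Acyclic E)
    (θ : ι → (∀ i, val i) → ℝ)
    (hθloc : ∀ i ω ω', (∀ j, (j = i ∨ E j i) → ω j = ω' j) → θ i ω = θ i ω')
    (hθnorm : ∀ i ω, ∑ v : val i, θ i (Function.update ω i v) = 1)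
    (A : Finset ι) :
    ∀ ω : ∀ i, val i,
      ∑ ω' : ∀ i, val i, (if ∀ i ∉ A, ω' i = ω i then ∏ j ∈ A, θ j ω' else 0) = 1 := by
  induction A using Finset.strongInduction with
  | _ A ih =>
    intro ω
    rcases A.eq_empty_or_nonempty with rfl | hA
    · have h1 : ∀ ω' : ∀ i, val i,
          (if ∀ i ∉ (∅ : Finset ι), ω' i = ω i then ∏ j ∈ (∅ : Finset ι), θ j ω' else 0)
            = if ω' = ω then 1 else 0 := by
        intro ω'
        rw [Finset.prod_empty]
        refine if_congr ⟨fun h => funext fun i => h i (by simp), fun h i _ => by rw [h]⟩ rfl rfl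
      rw [Finset.sum_congr rfl fun ω' _ => h1 ω']
      simp
    · obtain ⟨m, hmA, hsink⟩ := exists_sink E hacyc A hA
      have hmm : ¬ E m m := hsink m hmA
      rw [split_coord m (ω m)]
      have key : ∀ b : ∀ i, val i,
          (∑ v : val m, if b m = ω m then
            (if ∀ i ∉ A, Function.update b m v i = ω i then
              ∏ j ∈ A, θ j (Function.update b m v) else 0) else 0)
          = (if ∀ i ∉ A.erase m, b i = ω i then ∏ j ∈ A.erase m, θ j b else 0) := by
        intro b
        by_cases hb : ∀ i ∉ A.erase m, b i = ω i
        · have hbm : b m = ω m := hb m (Finset.notMem_erase m A)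
          have hcond : ∀ v : val m, ∀ i ∉ A, Function.update b m v i = ω i := by
            intro v i hi
            have him : i ≠ m := fun h => hi (h ▸ hmA)
            rw [Function.update_of_ne him]
            exact hb i (fun hiA' => hi (Finset.mem_of_mem_erase hiA'))
          have h2 : ∀ v : val m,
              (if b m = ω m then
                (if ∀ i ∉ A, Function.update b m v i = ω i then
                  ∏ j ∈ A, θ j (Function.update b m v) else 0) else 0)
              = θ m (Function.update b m v) * ∏ j ∈ A.erase m, θ j b := by
            intro v
            rw [if_pos hbm, if_pos (hcond v), ← Finset.mul_prod_erase A _ hmA]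
            congr 1
            refine Finset.prod_congr rfl fun j hj => ?_
            refine hθloc j _ _ fun k hk => ?_
            have hkm : k ≠ m := by
              rintro rfl
              rcases hk with rfl | hEk
              · exact (Finset.ne_of_mem_erase hj) rfl
              · exact hsink j (Finset.mem_of_mem_erase hj) hEk
            rw [Function.update_of_ne hkm]
          rw [Finset.sum_congr rfl fun v _ => h2 v, ← Finset.sum_mul, hθnorm m b, one_mul,
            if_pos hb]
        · rw [if_neg hb]
          refine Finset.sum_eq_zero fun v _ => ?_
          by_cases hbm : b m = ω m
          · rw [if_pos hbm, if_neg]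
            intro hcond
            apply hb
            intro i hi
            by_cases him : i = m
            · subst him; exact hbm
            · have hiA : i ∉ A := fun h => hi (Finset.mem_erase.mpr ⟨him, h⟩)
              have := hcond i hiA
              rwa [Function.update_of_ne him] at this
          · rw [if_neg hbm]
      rw [Finset.sum_congr rfl fun b _ => key b]
      exact ih (A.erase m) (Finset.erase_ssubset hmA) ω

lemma factor_out (E : ι → ι → Prop) (hacyc : Acyclic E)
    (θ : ι → (∀ i, val i) → ℝ)
    (hθloc : ∀ i ω ω', (∀ j, (j = i ∨ E j i) → ω j = ω' j) → θ i ω = θ i ω')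
    (hθnorm : ∀ i ω, ∑ v : val i, θ i (Function.update ω i v) = 1)
    (B : Finset ι) (d : ∀ i, val i)
    (F : (∀ i, val i) → ℝ) (C : (∀ i, val i) → Prop)
    (hF : ∀ a b, (∀ i ∉ B, a i = b i) → F a = F b)
    (hC : ∀ a b, (∀ i ∉ B, a i = b i) → (C a ↔ C b)) :
    ∑ ω' : ∀ i, val i, (if C ω' then F ω' * ∏ j ∈ B, θ j ω' else 0)
      = ∑ ω' : ∀ i, val i, (if C ω' ∧ ∀ i ∈ B, ω' i = d i then F ω' else 0) := by
  classical
  set φ : (∀ i, val i) → (∀ i, val i) := fun a => fun i => if i ∈ B then d i else a i with hφ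
  have step1 : ∀ h : (∀ i, val i) → ℝ, ∑ a : ∀ i, val i, h a
      = ∑ b : ∀ i, val i, ∑ a : ∀ i, val i, if φ a = b then h a else 0 := by
    intro h
    rw [Finset.sum_comm]
    refine Finset.sum_congr rfl fun a _ => ?_
    simp
  rw [step1]
  refine Finset.sum_congr rfl fun b _ => ?_
  by_cases hb : ∀ i ∈ B, b i = d i
  · have hfib : ∀ a : ∀ i, val i, φ a = b ↔ ∀ i ∉ B, a i = b i := by
      intro a
      constructor
      · intro h i hi
        rw [← h]; simp [hφ, hi]
      · intro h
        funext i
        by_cases hiB : i ∈ B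
        · simp [hφ, hiB, (hb i hiB).symm]
        · simp [hφ, hiB, h i hiB]
    have hterm : ∀ a : ∀ i, val i,
        (if φ a = b then (if C a then F a * ∏ j ∈ B, θ j a else 0) else 0)
        = (if C b then F b else 0) * (if ∀ i ∉ B, a i = b i then ∏ j ∈ B, θ j a else 0) := by
      intro a
      by_cases hfa : φ a = b
      · have hagree := (hfib a).mp hfa
        rw [if_pos hfa, if_pos hagree, hF a b hagree]
        by_cases hc : C b
        · rw [if_pos ((hC a b hagree).mpr hc), if_pos hc]
        · rw [if_neg (fun h => hc ((hC a b hagree).mp h)), if_neg hc, zero_mul]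
      · rw [if_neg hfa, if_neg (fun h => hfa ((hfib a).mpr h)), mul_zero]
    rw [Finset.sum_congr rfl fun a _ => hterm a, ← Finset.mul_sum,
      telescope E hacyc θ hθloc hθnorm B b, mul_one]
    by_cases hc : C b
    · rw [if_pos hc, if_pos ⟨hc, hb⟩]
    · rw [if_neg hc, if_neg (fun h => hc h.1)]
  · push_neg at hb
    obtain ⟨i0, hi0B, hi0⟩ := hb
    have hnofib : ∀ a : ∀ i, val i, φ a ≠ b := by
      intro a h
      apply hi0
      rw [← h]; simp [hφ, hi0B]
    rw [Finset.sum_eq_zero fun a _ => if_neg (hnofib a),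
      if_neg (fun h => hi0 (h.2 i0 hi0B))]


lemma rtg_to_path {α : Type*} {E' : α → α → Prop} {a : α} :
    ∀ {b : α}, Relation.ReflTransGen E' a b → a ≠ b →
      ∃ p : List α, p.Chain' E' ∧ p.head? = some a ∧ p.getLast? = some b := by
  intro b h
  induction h with
  | refl => exact fun hab => absurd rfl hab
  | @tail c d hr he ih =>
    intro _
    by_cases hac : a = c
    · subst hac
      exact ⟨[a, d], List.isChain_cons_cons.mpr ⟨he, List.isChain_singleton d⟩, rfl, rfl⟩
    · obtain ⟨p, hch, hh, hl⟩ := ih hac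
      have hpne : p ≠ [] := by rintro rfl; simp at hh
      refine ⟨p ++ [d], ?_, ?_, by simp⟩
      · refine List.isChain_append.mpr ?_
        refine ⟨hch, List.isChain_singleton d, fun x hx y hy => ?_⟩
        rw [hl] at hx
        simp only [Option.mem_def, Option.some.injEq, List.head?_cons] at hx hy
        subst hx; subst hy; exact he
      · cases p with
        | nil => exact absurd rfl hpne
        | cons e p' => simpa using hh

lemma chain'_all {α : Type*} {E : α → α → Prop} {Q : α → Prop} :
    ∀ (p : List α), p.Chain' (fun j k => E j k ∧ Q k) →
      ∀ a, p.head? = some a → Q a → ∀ v ∈ p, Q v := by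
  intro p
  induction p with
  | nil => intro _ _ _ _ v hv; simp at hv
  | cons c rest ih =>
    intro hch a ha hQ v hv
    have hca : c = a := by simpa using ha
    subst hca
    rcases List.mem_cons.mp hv with rfl | hv'
    · exact hQ
    · cases rest with
      | nil => simp at hv'
      | cons e rest' =>
        have h2 := List.isChain_cons_cons.mp hch
        exact ih h2.2 e rfl h2.1.2 v hv'

lemma len_two {α : Type*} {p : List α} {a b : α} (hh : p.head? = some a)
    (hl : p.getLast? = some b) (hab : a ≠ b) : 2 ≤ p.length := by
  match p with
  | [] => simp at hh
  | [x] =>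
    have h1 : x = a := by simpa using hh
    have h2 : x = b := by simpa using hl
    exact absurd (h1 ▸ h2) hab
  | x :: y :: r => simp [List.length]

lemma noZY_list (E : ι → ι → Prop) (X Z Y : Finset ι) (hZY : Disjoint Z Y)
    (hsep : FwdTSep E (↑Z) (↑Y) (↑X)) :
    ∀ (n : ℕ) (p : List ι), p.length ≤ n → p.Chain' (fun j k => E j k ∧ k ∉ X) →
      ∀ a ∈ Z, ∀ b ∈ Y, p.head? = some a → p.getLast? = some b →
        (∀ v ∈ p, v ∉ X) → False := by
  intro n
  induction n with
  | zero =>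
    intro p hlen _ a _ b _ hh _ _
    rw [List.length_eq_zero_iff.mp (Nat.le_zero.mp hlen)] at hh
    simp at hh
  | succ n ih =>
    intro p hlen hch a ha b hb hh hl hnX
    have hab : a ≠ b := fun h => (Finset.disjoint_left.mp hZY ha) (h ▸ hb)
    by_cases hint : ∃ v ∈ p, (v ∈ Z ∨ v ∈ Y) ∧ v ≠ a ∧ v ≠ b
    · obtain ⟨v, hvp, hvZY, hva, hvb⟩ := hint
      obtain ⟨q, r, rfl⟩ := List.append_of_mem hvp
      rcases hvZY with hvZ | hvY
      · -- pass to the suffix v :: r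
        have hqne : q ≠ [] := by
          rintro rfl
          exact hva (by simpa using hh)
        have hch' := (List.isChain_append.mp hch).2.1
        have hl' : (v :: r).getLast? = some b := by
          rw [List.getLast?_append] at hl
          have hsome : (v :: r).getLast? = some ((v :: r).getLast (by simp)) :=
            List.getLast?_eq_getLast (by simp)
          rw [hsome] at hl ⊢
          simpa using hl
        have hlen' : (v :: r).length ≤ n := by
          have h1 : 1 ≤ q.length := List.length_pos_iff.mpr hqne
          rw [List.length_append] at hlen
          omega
        exact ih (v :: r) hlen' hch' v hvZ b hb rfl hl'
          (fun u hu => hnX u (List.mem_append.mpr (Or.inr hu)))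
      · -- pass to the prefix q ++ [v]
        have hrne : r ≠ [] := by
          rintro rfl
          rw [List.getLast?_concat] at hl
          exact hvb (Option.some.inj hl)
        have hch' : (q ++ [v]).Chain' (fun j k => E j k ∧ k ∉ X) := by
          have h2 : ((q ++ [v]) ++ r).Chain' (fun j k => E j k ∧ k ∉ X) := by
            rwa [List.append_assoc, List.singleton_append]
          exact (List.isChain_append.mp h2).1
        have hh' : (q ++ [v]).head? = some a := by
          cases q with
          | nil => exact absurd (by simpa using hh) hva
          | cons c q' => simpa using hh
        have hlen' : (q ++ [v]).length ≤ n := by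
          have h1 : 1 ≤ r.length := List.length_pos_iff.mpr hrne
          rw [List.length_append] at hlen ⊢
          simp at hlen ⊢
          omega
        exact ih (q ++ [v]) hlen' hch' a ha v hvY hh' (List.getLast?_concat (l := q))
          (fun u hu => hnX u (by simp [List.mem_append] at hu ⊢; tauto))
    · push_neg at hint
      have hplen : 2 ≤ p.length := len_two hh hl hab
      have htrek : ProperFwdTrek E (↑Z) (↑Y) p := by
        refine ⟨a, ha, b, hb, ⟨hch.imp (fun _ _ h => h.1), hh, hl, hplen⟩, ?_⟩
        intro v hv hvZY
        by_cases hva : v = a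
        · exact Or.inl hva
        · refine Or.inr (hint v hv ?_ hva)
          simpa using hvZY
      obtain ⟨xx, hxxX, hxxp⟩ := hsep p htrek
      exact hnX xx hxxp (by exact_mod_cast hxxX)

lemma no_path (E : ι → ι → Prop) (X Z Y : Finset ι) (hXZ : Disjoint X Z)
    (hZY : Disjoint Z Y) (hsep : FwdTSep E (↑Z) (↑Y) (↑X))
    (a : ι) (ha : a ∈ Z) (b : ι) (hb : b ∈ Y) :
    ¬ Relation.ReflTransGen (fun j k => E j k ∧ k ∉ X) a b := by
  intro hr
  have hab : a ≠ b := fun h => (Finset.disjoint_left.mp hZY ha) (h ▸ hb)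
  obtain ⟨p, hch, hh, hl⟩ := rtg_to_path hr hab
  have haX : a ∉ X := Finset.disjoint_right.mp hXZ ha
  have hnX : ∀ v ∈ p, v ∉ X := chain'_all p hch a hh haX
  exact noZY_list E X Z Y hZY hsep p.length p le_rfl hch a ha b hb hh hl hnX

/-- Specialized Rule 3 (insertion/deletion of actions): if `Z` is forward-t-separated from
`Y` by `X` in the DAG `G`, then `P(Y ∣ do(X = x), do(Z = z)) = P(Y ∣ do(X = x))` for all
values `x`, `z`, where the interventional distributions are given by the truncated
factorization with positive conditional tables `θ`. -/
theorem do_calculus_rule3 (E : ι → ι → Prop) (hacyc : Acyclic E)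
    (θ : ι → (∀ i, val i) → ℝ)
    (hθpos : ∀ i ω, 0 < θ i ω)
    (hθloc : ∀ i ω ω', (∀ j, (j = i ∨ E j i) → ω j = ω' j) → θ i ω = θ i ω')
    (hθnorm : ∀ i ω, ∑ v : val i, θ i (Function.update ω i v) = 1)
    (X Z Y : Finset ι) (hXZ : Disjoint X Z) (hXY : Disjoint X Y) (hZY : Disjoint Z Y)
    (hsep : FwdTSep E (↑Z) (↑Y) (↑X)) :
    ∀ (x z ω : ∀ i, val i),
      marg (Pdo θ (X ∪ Z) (fun i => if i ∈ Z then z i else x i)) Y ω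
        = marg (Pdo θ X x) Y ω := by
  intro x z ω
  classical
  set t : ∀ i, val i := fun i => if i ∈ Z then z i else x i with ht
  set E' : ι → ι → Prop := fun j k => E j k ∧ k ∉ X with hE'
  set S : Finset ι :=
    Finset.univ.filter (fun i => ∃ zz ∈ Z, Relation.ReflTransGen E' zz i) with hSdef
  have hZS : ∀ i ∈ Z, i ∈ S := fun i hi =>
    Finset.mem_filter.mpr ⟨Finset.mem_univ i, i, hi, Relation.ReflTransGen.refl⟩
  have hSX : ∀ i ∈ S, i ∉ X := by
    intro i hi
    obtain ⟨zz, hzz, hr⟩ := (Finset.mem_filter.mp hi).2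
    rcases hr.cases_tail with heq | ⟨c, _, he⟩
    · exact heq ▸ Finset.disjoint_right.mp hXZ hzz
    · exact he.2
  have hSY : ∀ i ∈ S, i ∉ Y := by
    intro i hi hiY
    obtain ⟨zz, hzz, hr⟩ := (Finset.mem_filter.mp hi).2
    exact no_path E X Z Y hXZ hZY hsep zz hzz i hiY hr
  have hclo : ∀ i j, i ∈ S → E i j → j ∉ X → j ∈ S := by
    intro i j hi hij hjX
    obtain ⟨zz, hzz, hr⟩ := (Finset.mem_filter.mp hi).2
    exact Finset.mem_filter.mpr ⟨Finset.mem_univ j, zz, hzz, hr.tail ⟨hij, hjX⟩⟩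
  set R : Finset ι := (S ∪ X)ᶜ with hRdef
  have hmemR : ∀ i, i ∈ R ↔ (i ∉ S ∧ i ∉ X) := by
    intro i
    rw [hRdef]
    simp [not_or]
  have hsplit1 : (X ∪ Z)ᶜ = R ∪ (S \ Z) := by
    ext i
    have h1 := hZS i
    have h2 := hSX i
    rw [Finset.mem_union, hmemR i]
    simp only [Finset.mem_compl, Finset.mem_union, Finset.mem_sdiff, not_or]
    tauto
  have hsplit2 : Xᶜ = R ∪ S := by
    ext i
    have h2 := hSX i
    rw [Finset.mem_union, hmemR i]
    simp only [Finset.mem_compl]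
    tauto
  have hdisj1 : Disjoint R (S \ Z) := by
    rw [Finset.disjoint_left]
    intro i hiR hiS
    exact ((hmemR i).mp hiR).1 (Finset.mem_sdiff.mp hiS).1
  have hdisj2 : Disjoint R S := by
    rw [Finset.disjoint_left]
    intro i hiR hiS
    exact ((hmemR i).mp hiR).1 hiS
  set F : (∀ i, val i) → ℝ := fun ω' => ∏ i ∈ R, θ i ω' with hFdef
  have hFdep : ∀ (B : Finset ι), (∀ i ∈ B, i ∈ S) →
      ∀ a b : ∀ i, val i, (∀ i ∉ B, a i = b i) → F a = F b := by
    intro B hBS a b hab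
    refine Finset.prod_congr rfl fun i hi => ?_
    have hiR := (hmemR i).mp hi
    apply hθloc
    intro j hj
    apply hab
    intro hjB
    have hjS := hBS j hjB
    rcases hj with rfl | hE
    · exact hiR.1 hjS
    · exact hiR.1 (hclo j i hjS hE hiR.2)
  have hmarg : ∀ (T : Finset ι) (tt : ∀ i, val i),
      marg (Pdo θ T tt) Y ω = ∑ ω' : ∀ i, val i,
        (if ((∀ i ∈ Y, ω' i = ω i) ∧ ∀ i ∈ T, ω' i = tt i) then ∏ i ∈ Tᶜ, θ i ω' else 0) := by
    intro T tt
    simp only [marg, Pdo]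
    refine Finset.sum_congr rfl fun ω' _ => ?_
    by_cases h1 : ∀ i ∈ Y, ω' i = ω i
    · by_cases h2 : ∀ i ∈ T, ω' i = tt i
      · rw [if_pos h1, if_pos h2, if_pos ⟨h1, h2⟩]
      · rw [if_pos h1, if_neg h2, if_neg (fun h => h2 h.2)]
    · rw [if_neg h1, if_neg (fun h => h1 h.1)]
  rw [hmarg, hmarg]
  have hL : (∑ ω' : ∀ i, val i,
        (if ((∀ i ∈ Y, ω' i = ω i) ∧ ∀ i ∈ X ∪ Z, ω' i = t i)
          then ∏ i ∈ (X ∪ Z)ᶜ, θ i ω' else 0))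
      = ∑ ω' : ∀ i, val i,
        (if (((∀ i ∈ Y, ω' i = ω i) ∧ ∀ i ∈ X ∪ Z, ω' i = t i) ∧ ∀ i ∈ S \ Z, ω' i = t i)
          then F ω' else 0) := by
    have hprod : ∀ ω' : ∀ i, val i,
        ∏ i ∈ (X ∪ Z)ᶜ, θ i ω' = F ω' * ∏ j ∈ S \ Z, θ j ω' := by
      intro ω'
      rw [hsplit1, Finset.prod_union hdisj1]
    rw [Finset.sum_congr rfl fun ω' _ => by rw [hprod ω']]
    have hCC : ∀ a b : ∀ i, val i, (∀ i ∉ S \ Z, a i = b i) →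
        (((∀ i ∈ Y, a i = ω i) ∧ ∀ i ∈ X ∪ Z, a i = t i) ↔
          ((∀ i ∈ Y, b i = ω i) ∧ ∀ i ∈ X ∪ Z, b i = t i)) := by
      intro a b hab
      have hkey : ∀ i, i ∈ Y ∨ i ∈ X ∪ Z → a i = b i := by
        intro i hi
        apply hab
        intro hiB
        have hiS := (Finset.mem_sdiff.mp hiB).1
        have hiZ := (Finset.mem_sdiff.mp hiB).2
        rcases hi with hiY | hiXZ
        · exact hSY i hiS hiY
        · rcases Finset.mem_union.mp hiXZ with hiX | hiZ'
          · exact hSX i hiS hiX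
          · exact hiZ hiZ'
      constructor
      · rintro ⟨hY, hT⟩
        exact ⟨fun i hi => (hkey i (Or.inl hi)) ▸ hY i hi,
          fun i hi => (hkey i (Or.inr hi)) ▸ hT i hi⟩
      · rintro ⟨hY, hT⟩
        exact ⟨fun i hi => (hkey i (Or.inl hi)).trans (hY i hi),
          fun i hi => (hkey i (Or.inr hi)).trans (hT i hi)⟩
    have hfo := factor_out E hacyc θ hθloc hθnorm (S \ Z) t F
      (fun ω' => (∀ i ∈ Y, ω' i = ω i) ∧ ∀ i ∈ X ∪ Z, ω' i = t i)
      (hFdep (S \ Z) (fun i hi => (Finset.mem_sdiff.mp hi).1)) hCC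
    convert hfo using 2 <;> (beta_reduce; split_ifs with h <;> rfl)
  have hR : (∑ ω' : ∀ i, val i,
        (if ((∀ i ∈ Y, ω' i = ω i) ∧ ∀ i ∈ X, ω' i = x i)
          then ∏ i ∈ Xᶜ, θ i ω' else 0))
      = ∑ ω' : ∀ i, val i,
        (if (((∀ i ∈ Y, ω' i = ω i) ∧ ∀ i ∈ X, ω' i = x i) ∧ ∀ i ∈ S, ω' i = t i)
          then F ω' else 0) := by
    have hprod : ∀ ω' : ∀ i, val i,
        ∏ i ∈ Xᶜ, θ i ω' = F ω' * ∏ j ∈ S, θ j ω' := by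
      intro ω'
      rw [hsplit2, Finset.prod_union hdisj2]
    rw [Finset.sum_congr rfl fun ω' _ => by rw [hprod ω']]
    have hCC : ∀ a b : ∀ i, val i, (∀ i ∉ S, a i = b i) →
        (((∀ i ∈ Y, a i = ω i) ∧ ∀ i ∈ X, a i = x i) ↔
          ((∀ i ∈ Y, b i = ω i) ∧ ∀ i ∈ X, b i = x i)) := by
      intro a b hab
      have hkey : ∀ i, i ∈ Y ∨ i ∈ X → a i = b i := by
        intro i hi
        apply hab
        intro hiS
        rcases hi with hiY | hiX
        · exact hSY i hiS hiY
        · exact hSX i hiS hiX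
      constructor
      · rintro ⟨hY, hT⟩
        exact ⟨fun i hi => (hkey i (Or.inl hi)) ▸ hY i hi,
          fun i hi => (hkey i (Or.inr hi)) ▸ hT i hi⟩
      · rintro ⟨hY, hT⟩
        exact ⟨fun i hi => (hkey i (Or.inl hi)).trans (hY i hi),
          fun i hi => (hkey i (Or.inr hi)).trans (hT i hi)⟩
    have hfo := factor_out E hacyc θ hθloc hθnorm S t F
      (fun ω' => (∀ i ∈ Y, ω' i = ω i) ∧ ∀ i ∈ X, ω' i = x i)
      (hFdep S (fun i hi => hi)) hCC
    convert hfo using 2 <;> (beta_reduce; split_ifs with h <;> rfl)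
  rw [hL, hR]
  refine Finset.sum_congr rfl fun ω' _ => ?_
  refine if_congr ?_ rfl rfl
  have htX : ∀ i ∈ X, t i = x i := by
    intro i hi
    have hiZ : i ∉ Z := Finset.disjoint_left.mp hXZ hi
    simp [ht, hiZ]
  constructor
  · rintro ⟨⟨hY, hT⟩, hB⟩
    refine ⟨⟨hY, fun i hi => ?_⟩, fun i hi => ?_⟩
    · rw [hT i (Finset.mem_union_left Z hi), htX i hi]
    · by_cases hiZ : i ∈ Z
      · exact hT i (Finset.mem_union_right X hiZ)
      · exact hB i (Finset.mem_sdiff.mpr ⟨hi, hiZ⟩)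
  · rintro ⟨⟨hY, hX'⟩, hS'⟩
    refine ⟨⟨hY, fun i hi => ?_⟩, fun i hi => hS' i (Finset.mem_sdiff.mp hi).1⟩
    rcases Finset.mem_union.mp hi with hiX | hiZ
    · rw [hX' i hiX, htX i hiX]
    · exact hS' i (hZS i hiZ)
end

section
/- Let G be a DAG over finite-valued random variables V with interventional distributions defined by the truncated factorization with positive conditional tables. Then Rule 2 of the do-calculus holds in the specialized form: for disjoint X, Z, Y ⊆ V, if Z is backward-t-separated from Y by X in G, then P(Y | do(X=x), do(Z=z)) = P(Y | do(X=x), Z=z) for all values x, z for which the conditioning event has positive probability. -/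
open scoped Classical
open Finset

variable {ι : Type*} [Fintype ι] [DecidableEq ι] {val : ι → Type*} [∀ i, Fintype (val i)]

variable {V : Type*}

section GraphAux

set_option linter.unusedSectionVars false


set_option linter.unusedSectionVars false

variable {ι : Type*} [DecidableEq ι] {E : ι → ι → Prop} {X Z Y : Finset ι}

theorem chain_forall_prop {R : ι → ι → Prop} {P : ι → Prop} (hR : ∀ a b, R a b → P b) :
    ∀ {a : ι} {l : List ι}, List.Chain R a l → ∀ c ∈ l, P c := by
  intro a l
  induction l generalizing a with
  | nil => intro _ c hc; exact absurd hc List.not_mem_nil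
  | cons b l ih =>
    intro h c hc
    replace h := List.chain_cons.1 h
    rcases List.mem_cons.1 hc with rfl | hc
    · exact hR _ _ h.1
    · exact ih h.2 c hc

theorem rtg_chain_ne {R : ι → ι → Prop} {a b : ι} (h : Relation.ReflTransGen R a b)
    (hne : a ≠ b) : ∃ l, List.Chain R a (l ++ [b]) := by
  obtain ⟨l, hc, hl⟩ := List.exists_isChain_cons_of_relationReflTransGen h
  rcases List.eq_nil_or_concat l with rfl | ⟨l', c, rfl⟩
  · exact absurd hl hne
  · rw [List.concat_eq_append] at hc hl
    have hne' : l' ++ [c] ≠ [] := by simp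
    have heq : (a :: (l' ++ [c])).getLast (List.cons_ne_nil _ _) = c := by
      rw [List.getLast_cons hne']
      simp
    rw [heq] at hl
    subst hl
    exact ⟨l', hc⟩

theorem chain_head_not {R : ι → ι → Prop} {P : ι → Prop} (hR : ∀ a b, R a b → P a)
    {a b : ι} {l : List ι} (h : List.Chain R a (l ++ [b])) : P a := by
  cases l with
  | nil => exact hR _ _ (List.chain_cons.1 h).1
  | cons c l => exact hR _ _ (List.chain_cons.1 h).1

theorem isDirPath_of_chain {E : ι → ι → Prop} {a b : ι} {l : List ι}
    (h : List.Chain E a (l ++ [b])) : IsDirPath E (a :: (l ++ [b])) a b := by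
  refine ⟨h, rfl, ?_, by simp⟩
  show (a :: (l ++ [b])).getLast? = some b
  rw [show a :: (l ++ [b]) = (a :: l) ++ [b] by simp]
  exact List.getLast?_concat





/-- Local notation for the `X`-avoiding edge relation. -/
def EXrel (E : ι → ι → Prop) (X : Finset ι) : ι → ι → Prop :=
  fun a b => E a b ∧ a ∉ X ∧ b ∉ X

/-- Local notation for the `X ∪ Z`-avoiding edge relation. -/
def EXZrel (E : ι → ι → Prop) (X Z : Finset ι) : ι → ι → Prop :=
  fun a b => E a b ∧ a ∉ X ∧ a ∉ Z ∧ b ∉ X ∧ b ∉ Z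

theorem no_path_Y_to_Z (hXY : Disjoint X Y) (hXZ : Disjoint X Z)
    (hsep : BwdTSep E (↑Z) (↑Y) (↑X)) :
    ∀ (l : List ι) (y u : ι), y ∈ Y → u ∈ Z → List.Chain (EXrel E X) y (l ++ [u]) → False := by
  intro l
  obtain ⟨n, hn⟩ : ∃ n, l.length = n := ⟨_, rfl⟩
  induction n using Nat.strong_induction_on generalizing l with
  | _ n IH =>
  intro y u hy hu hchain
  by_cases hz : ∃ c ∈ l, c ∈ Z
  · obtain ⟨c, hcl, hcZ⟩ := hz
    obtain ⟨l1, l2, rfl⟩ := List.append_of_mem hcl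
    have hsplit := List.isChain_cons_split.1 (show List.Chain (EXrel E X) y (l1 ++ c :: (l2 ++ [u])) by
      simpa using hchain)
    have hlen : l1.length < n := by
      rw [← hn]; simp [List.length_append]
    exact IH l1.length hlen l1 rfl y c hy hcZ hsplit.1
  by_cases hyy : ∃ c ∈ l, c ∈ Y
  · obtain ⟨c, hcl, hcY⟩ := hyy
    obtain ⟨l1, l2, rfl⟩ := List.append_of_mem hcl
    have hsplit := List.isChain_cons_split.1 (show List.Chain (EXrel E X) y (l1 ++ c :: (l2 ++ [u])) by
      simpa using hchain)
    have hlen : l2.length < n := by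
      rw [← hn]; simp [List.length_append]
      omega
    exact IH l2.length hlen l2 rfl c u hcY hu hsplit.2
  · -- build a proper backward trek avoiding X
    set p := y :: (l ++ [u]) with hp
    have hdir : IsDirPath E p y u := by
      refine isDirPath_of_chain (List.Chain.imp (fun a b h => h.1) hchain)
    have hprop : ProperBwdTrek E (↑Z) (↑Y) p := by
      refine ⟨u, by simpa using hu, y, by simpa using hy, Or.inl hdir, ?_⟩
      intro x hx hxZY
      rcases List.mem_cons.1 hx with rfl | hx
      · exact Or.inr rfl
      rcases List.mem_append.1 hx with hx | hx
      · exfalso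
        rcases hxZY with hxZ' | hxY'
        · exact hz ⟨x, hx, by simpa using hxZ'⟩
        · exact hyy ⟨x, hx, by simpa using hxY'⟩
      · simp only [List.mem_singleton] at hx
        exact Or.inl hx
    obtain ⟨x0, hx0X, hx0p⟩ := hsep p hprop
    have hx0X' : x0 ∈ X := by simpa using hx0X
    have hnotX : ∀ c ∈ p, c ∉ X := by
      intro c hc
      rcases List.mem_cons.1 hc with rfl | hc
      · exact Finset.disjoint_right.1 hXY hy
      · exact chain_forall_prop (fun a b (h : EXrel E X a b) => h.2.2) hchain c hc
    exact hnotX x0 hx0p hx0X'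





theorem trim_to_Z (hXY : Disjoint X Y) (hXZ : Disjoint X Z) (hZY : Disjoint Z Y)
    (hsep : BwdTSep E (↑Z) (↑Y) (↑X)) :
    ∀ (l : List ι) (v u : ι), v ∉ Z → v ∉ Y → u ∈ Z → List.Chain (EXrel E X) v (l ++ [u]) →
      ∃ u' ∈ Z, ∃ l', List.Chain (EXrel E X) v (l' ++ [u']) ∧ ∀ c ∈ l', c ∉ Z ∧ c ∉ Y := by
  intro l
  obtain ⟨n, hn⟩ : ∃ n, l.length = n := ⟨_, rfl⟩
  induction n using Nat.strong_induction_on generalizing l with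
  | _ n IH =>
  intro v u hvZ hvY hu hchain
  by_cases hz : ∃ c ∈ l, c ∈ Z
  · obtain ⟨c, hcl, hcZ⟩ := hz
    obtain ⟨l1, l2, rfl⟩ := List.append_of_mem hcl
    have hsplit := List.isChain_cons_split.1 (show List.Chain (EXrel E X) v (l1 ++ c :: (l2 ++ [u])) by
      simpa using hchain)
    have hlen : l1.length < n := by
      rw [← hn]; simp [List.length_append]
    exact IH l1.length hlen l1 rfl v c hvZ hvY hcZ hsplit.1
  by_cases hyy : ∃ c ∈ l, c ∈ Y
  · obtain ⟨c, hcl, hcY⟩ := hyy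
    obtain ⟨l1, l2, rfl⟩ := List.append_of_mem hcl
    have hsplit := List.isChain_cons_split.1 (show List.Chain (EXrel E X) v (l1 ++ c :: (l2 ++ [u])) by
      simpa using hchain)
    exact absurd hsplit.2 (fun h => no_path_Y_to_Z hXY hXZ hsep l2 c u hcY hu h)
  · exact ⟨u, hu, l, hchain, fun c hc => ⟨fun h => hz ⟨c, hc, h⟩, fun h => hyy ⟨c, hc, h⟩⟩⟩

theorem trim_to_Y :
    ∀ (l : List ι) (v w : ι), v ∉ Y → w ∈ Y → List.Chain (EXZrel E X Z) v (l ++ [w]) →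
      ∃ w' ∈ Y, ∃ l', List.Chain (EXZrel E X Z) v (l' ++ [w']) ∧ ∀ c ∈ l', c ∉ Y := by
  intro l
  obtain ⟨n, hn⟩ : ∃ n, l.length = n := ⟨_, rfl⟩
  induction n using Nat.strong_induction_on generalizing l with
  | _ n IH =>
  intro v w hvY hw hchain
  by_cases hyy : ∃ c ∈ l, c ∈ Y
  · obtain ⟨c, hcl, hcY⟩ := hyy
    obtain ⟨l1, l2, rfl⟩ := List.append_of_mem hcl
    have hsplit := List.isChain_cons_split.1 (show List.Chain (EXZrel E X Z) v (l1 ++ c :: (l2 ++ [w])) by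
      simpa using hchain)
    have hlen : l1.length < n := by
      rw [← hn]; simp [List.length_append]
    exact IH l1.length hlen l1 rfl v c hvY hcY hsplit.1
  · exact ⟨w, hw, l, hchain, fun c hc => fun h => hyy ⟨c, hc, h⟩⟩

theorem no_common_anc (hXY : Disjoint X Y) (hXZ : Disjoint X Z) (hZY : Disjoint Z Y)
    (hsep : BwdTSep E (↑Z) (↑Y) (↑X)) :
    ∀ (n : ℕ) (q r : List ι) (k u w : ι), q.length + r.length ≤ n →
      k ∉ X → k ∉ Y → k ∉ Z → u ∈ Z → w ∈ Y →
      List.Chain (EXrel E X) k (q ++ [u]) → List.Chain (EXZrel E X Z) k (r ++ [w]) →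
      (∀ c ∈ q, c ∉ Z ∧ c ∉ Y) → (∀ c ∈ r, c ∉ Y) → False := by
  intro n
  induction n using Nat.strong_induction_on with
  | _ n IH =>
  intro q r k u w hlen hkX hkY hkZ hu hw hq hr hqP hrP
  have hrNotZ : ∀ c ∈ r ++ [w], c ∉ Z := by
    intro c hc
    rcases List.mem_append.1 hc with hc | hc
    · exact chain_forall_prop (fun a b (h : EXZrel E X Z a b) => h.2.2.2.2) hr c
        (List.mem_append.2 (Or.inl hc))
    · simp only [List.mem_singleton] at hc
      subst hc
      exact Finset.disjoint_left.1 hZY.symm hw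
  have hqNotY : ∀ c ∈ q ++ [u], c ∉ Y := by
    intro c hc
    rcases List.mem_append.1 hc with hc | hc
    · exact (hqP c hc).2
    · simp only [List.mem_singleton] at hc
      subst hc
      exact Finset.disjoint_left.1 hZY hu
  by_cases hcom : ∃ c, c ∈ q ++ [u] ∧ c ∈ r ++ [w]
  · obtain ⟨c, hcq, hcr⟩ := hcom
    have hcZ : c ∉ Z := hrNotZ c hcr
    have hcY : c ∉ Y := hqNotY c hcq
    have hcq' : c ∈ q := by
      rcases List.mem_append.1 hcq with h | h
      · exact h
      · simp only [List.mem_singleton] at h; exact absurd (h ▸ hu) hcZ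
    have hcr' : c ∈ r := by
      rcases List.mem_append.1 hcr with h | h
      · exact h
      · simp only [List.mem_singleton] at h; exact absurd (h ▸ hw) hcY
    have hcX : c ∉ X :=
      chain_forall_prop (fun a b (h : EXrel E X a b) => h.2.2) hq c
        (List.mem_append.2 (Or.inl hcq'))
    obtain ⟨qa, qb, rfl⟩ := List.append_of_mem hcq'
    obtain ⟨ra, rb, rfl⟩ := List.append_of_mem hcr'
    have hsq := (List.isChain_cons_split.1 (show List.Chain (EXrel E X) k (qa ++ c :: (qb ++ [u])) by
      simpa using hq)).2
    have hsr := (List.isChain_cons_split.1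
      (show List.Chain (EXZrel E X Z) k (ra ++ c :: (rb ++ [w])) by simpa using hr)).2
    have hlen' : qb.length + rb.length < n := by
      have h1 : qb.length < (qa ++ c :: qb).length := by simp [List.length_append]; omega
      have h2 : rb.length < (ra ++ c :: rb).length := by simp [List.length_append]; omega
      omega
    exact IH (qb.length + rb.length) hlen' qb rb c u w le_rfl hcX hcY hcZ hu hw hsq hsr
      (fun d hd => hqP d (List.mem_append.2 (Or.inr (List.mem_cons.2 (Or.inr hd)))))
      (fun d hd => hrP d (List.mem_append.2 (Or.inr (List.mem_cons.2 (Or.inr hd)))))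
  · -- build the common-cause proper backward trek
    set qlist := k :: (q ++ [u]) with hql
    set rlist := k :: (r ++ [w]) with hrl
    set p := qlist ++ rlist with hp
    have hdq : IsDirPath E qlist k u := isDirPath_of_chain (List.Chain.imp (fun a b h => h.1) hq)
    have hdr : IsDirPath E rlist k w := isDirPath_of_chain (List.Chain.imp (fun a b h => h.1) hr)
    have hku : k ≠ u := fun h => hkZ (h ▸ hu)
    have hkw : k ≠ w := fun h => hkY (h ▸ hw)
    have hdisj : ∀ x, x ∈ qlist → x ∈ rlist → x = k := by
      intro x hxq hxr
      rcases List.mem_cons.1 hxq with rfl | hxq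
      · rfl
      rcases List.mem_cons.1 hxr with rfl | hxr
      · rfl
      exact absurd (⟨x, hxq, hxr⟩ : ∃ c, c ∈ q ++ [u] ∧ c ∈ r ++ [w]) hcom
    have htrek : IsBwdTrek E p u w := Or.inr ⟨k, qlist, rlist, hku, hkw, hdq, hdr, hdisj, rfl⟩
    have hprop : ProperBwdTrek E (↑Z) (↑Y) p := by
      refine ⟨u, by simpa using hu, w, by simpa using hw, htrek, ?_⟩
      intro x hx hxZY
      rcases List.mem_append.1 hx with hx | hx
      · rcases List.mem_cons.1 hx with rfl | hx
        · exfalso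
          rcases hxZY with h | h
          · exact hkZ (by simpa using h)
          · exact hkY (by simpa using h)
        rcases List.mem_append.1 hx with hx | hx
        · exfalso
          rcases hxZY with h | h
          · exact (hqP x hx).1 (by simpa using h)
          · exact (hqP x hx).2 (by simpa using h)
        · simp only [List.mem_singleton] at hx
          exact Or.inl hx
      · rcases List.mem_cons.1 hx with rfl | hx
        · exfalso
          rcases hxZY with h | h
          · exact hkZ (by simpa using h)
          · exact hkY (by simpa using h)
        rcases List.mem_append.1 hx with hx | hx
        · exfalso
          rcases hxZY with h | h
          · exact hrNotZ x (List.mem_append.2 (Or.inl hx)) (by simpa using h)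
          · exact hrP x hx (by simpa using h)
        · simp only [List.mem_singleton] at hx
          exact Or.inr hx
    obtain ⟨x0, hx0X, hx0p⟩ := hsep p hprop
    have hx0X' : x0 ∈ X := by simpa using hx0X
    have hnotX : ∀ c ∈ p, c ∉ X := by
      intro c hc
      rcases List.mem_append.1 hc with hc | hc
      · rcases List.mem_cons.1 hc with rfl | hc
        · exact hkX
        · exact chain_forall_prop (fun a b (h : EXrel E X a b) => h.2.2) hq c hc
      · rcases List.mem_cons.1 hc with rfl | hc
        · exact hkX
        · exact chain_forall_prop (fun a b (h : EXZrel E X Z a b) => h.2.2.2.1) hr c hc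
    exact hnotX x0 hx0p hx0X'

/-- Key separation consequence: no vertex outside `Z` has both an `X`-avoiding directed
path to `Z` and an `X ∪ Z`-avoiding directed path to `Y`. -/
theorem anZ_anY_disjoint (hXY : Disjoint X Y) (hXZ : Disjoint X Z) (hZY : Disjoint Z Y)
    (hsep : BwdTSep E (↑Z) (↑Y) (↑X)) (v : ι) (hvZ : v ∉ Z)
    (h1 : ∃ u ∈ Z, Relation.ReflTransGen (EXrel E X) v u)
    (h2 : ∃ w ∈ Y, Relation.ReflTransGen (EXZrel E X Z) v w) : False := by
  obtain ⟨u, hu, hru⟩ := h1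
  obtain ⟨w, hw, hrw⟩ := h2
  have hvu : v ≠ u := fun h => hvZ (h ▸ hu)
  obtain ⟨l, hchain⟩ := rtg_chain_ne hru hvu
  by_cases hvY : v ∈ Y
  · exact no_path_Y_to_Z hXY hXZ hsep l v u hvY hu hchain
  have hvw : v ≠ w := fun h => hvY (h ▸ hw)
  obtain ⟨m, hchain2⟩ := rtg_chain_ne hrw hvw
  obtain ⟨u', hu', q, hq, hqP⟩ := trim_to_Z hXY hXZ hZY hsep l v u hvZ hvY hu hchain
  obtain ⟨w', hw', r, hr, hrP⟩ := trim_to_Y m v w hvY hw hchain2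
  have hvX : v ∉ X := chain_head_not (fun a b (h : EXrel E X a b) => h.2.1) hq
  exact no_common_anc hXY hXZ hZY hsep (q.length + r.length) q r v u' w' le_rfl
    hvX hvY hvZ hu' hw' hq hr hqP hrP


end GraphAux

section MsumAux

set_option linter.unusedSectionVars false

variable {ι : Type*} [Fintype ι] [DecidableEq ι] {val : ι → Type*} [∀ i, Fintype (val i)]

/-- Sum of `g` over all assignments agreeing with `ω` outside `S`. -/
noncomputable def msum (S : Finset ι) (g : (∀ i, val i) → ℝ) (ω : ∀ i, val i) : ℝ :=
  ∑ ω' : ∀ i, val i, if ∀ j ∉ S, ω' j = ω j then g ω' else 0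

theorem msum_congr {S : Finset ι} {g h : (∀ i, val i) → ℝ} {ω : ∀ i, val i}
    (H : ∀ ω', (∀ j ∉ S, ω' j = ω j) → g ω' = h ω') : msum S g ω = msum S h ω := by
  unfold msum
  refine Finset.sum_congr rfl fun ω' _ => ?_
  by_cases hc : ∀ j ∉ S, ω' j = ω j
  · simp [hc, H ω' hc]
  · simp [hc]

theorem msum_base_congr {S : Finset ι} {g : (∀ i, val i) → ℝ} {ω ω₁ : ∀ i, val i}
    (H : ∀ j ∉ S, ω₁ j = ω j) : msum S g ω₁ = msum S g ω := by
  unfold msum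
  refine Finset.sum_congr rfl fun ω' _ => ?_
  have : (∀ j ∉ S, ω' j = ω₁ j) ↔ (∀ j ∉ S, ω' j = ω j) := by
    constructor <;> intro h j hj
    · rw [h j hj, H j hj]
    · rw [h j hj, H j hj]
  simp only [this]

theorem msum_mul_const {S : Finset ι} {g : (∀ i, val i) → ℝ} {ω : ∀ i, val i} (c : ℝ) :
    msum S (fun ω' => g ω' * c) ω = msum S g ω * c := by
  unfold msum
  rw [Finset.sum_mul]
  refine Finset.sum_congr rfl fun ω' _ => ?_
  by_cases hc : ∀ j ∉ S, ω' j = ω j <;> simp [hc]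

theorem msum_const_mul {S : Finset ι} {g : (∀ i, val i) → ℝ} {ω : ∀ i, val i} (c : ℝ) :
    msum S (fun ω' => c * g ω') ω = c * msum S g ω := by
  unfold msum
  rw [Finset.mul_sum]
  refine Finset.sum_congr rfl fun ω' _ => ?_
  by_cases hc : ∀ j ∉ S, ω' j = ω j <;> simp [hc]

theorem msum_empty {g : (∀ i, val i) → ℝ} {ω : ∀ i, val i} : msum (∅ : Finset ι) g ω = g ω := by
  unfold msum
  rw [Finset.sum_eq_single ω]
  · simp
  · intro ω' _ hne
    have : ¬ ∀ j ∉ (∅ : Finset ι), ω' j = ω j := by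
      intro h
      exact hne (funext fun j => h j (Finset.notMem_empty j))
    simp only [Finset.notMem_empty, not_false_iff, forall_true_left] at this ⊢
    simp [this]
  · simp

/-- Peel off summation over the value of one free coordinate. -/
theorem msum_eq_sum_update {S : Finset ι} {g : (∀ i, val i) → ℝ} {ω : ∀ i, val i} {i : ι}
    (hi : i ∈ S) :
    msum S g ω = ∑ v : val i, msum (S.erase i) g (Function.update ω i v) := by
  unfold msum
  rw [Finset.sum_comm]
  refine Finset.sum_congr rfl fun ω' _ => ?_
  have key : ∀ v : val i, (∀ j ∉ S.erase i, ω' j = Function.update ω i v j) ↔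
      (ω' i = v ∧ ∀ j ∉ S, ω' j = ω j) := by
    intro v
    constructor
    · intro h
      refine ⟨by simpa using h i (Finset.notMem_erase i S), fun j hj => ?_⟩
      have hj' : j ∉ S.erase i := fun hc => hj (Finset.mem_of_mem_erase hc)
      have hji : j ≠ i := fun he => hj (he ▸ hi)
      simpa [Function.update, hji] using h j hj'
    · rintro ⟨h1, h2⟩ j hj
      by_cases hji : j = i
      · subst hji; simpa using h1
      · have : j ∉ S := fun hc => hj (Finset.mem_erase.2 ⟨hji, hc⟩)
        simpa [Function.update, hji] using h2 j this
  calc (if ∀ j ∉ S, ω' j = ω j then g ω' else 0)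
      = ∑ v : val i, if ω' i = v then (if ∀ j ∉ S, ω' j = ω j then g ω' else 0) else 0 := by
        rw [Finset.sum_ite_eq univ (ω' i) (fun _ => if ∀ j ∉ S, ω' j = ω j then g ω' else 0)]
        simp
    _ = ∑ v : val i, if ∀ j ∉ S.erase i, ω' j = Function.update ω i v j then g ω' else 0 := by
        refine Finset.sum_congr rfl fun v _ => ?_
        simp only [key v]
        by_cases h1 : ω' i = v <;> by_cases h2 : ∀ j ∉ S, ω' j = ω j <;> simp [h1, h2]

/-- Iterated summation: split free coordinates into two disjoint groups. -/
theorem msum_union {S T : Finset ι} (hST : Disjoint S T) (g : (∀ i, val i) → ℝ)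
    (ω : ∀ i, val i) : msum (S ∪ T) g ω = msum S (fun ω₁ => msum T g ω₁) ω := by
  classical
  induction S using Finset.induction_on generalizing ω with
  | empty => simp [msum_empty]
  | @insert i S hiS IH =>
    have hiT : i ∉ T := Finset.disjoint_left.1 hST (Finset.mem_insert_self i S)
    have hST' : Disjoint S T := Finset.disjoint_of_subset_left (Finset.subset_insert i S) hST
    have h1 : i ∈ insert i S ∪ T := Finset.mem_union_left _ (Finset.mem_insert_self i S)
    rw [msum_eq_sum_update h1, msum_eq_sum_update (Finset.mem_insert_self i S)]
    refine Finset.sum_congr rfl fun v _ => ?_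
    have he : (insert i S ∪ T).erase i = S ∪ T := by
      ext j
      simp only [Finset.mem_erase, Finset.mem_union, Finset.mem_insert]
      constructor
      · rintro ⟨hj, hj2 | hj2⟩
        · rcases hj2 with h | h
          · exact absurd h hj
          · exact Or.inl h
        · exact Or.inr hj2
      · rintro (hj | hj)
        · exact ⟨fun he => hiS (he ▸ hj), Or.inl (Or.inr hj)⟩
        · exact ⟨fun he => hiT (he ▸ hj), Or.inr hj⟩
    have he2 : (insert i S).erase i = S := Finset.erase_insert hiS
    rw [he, he2, IH hST']

/-- `msum` does not depend on the value of the base at a coordinate on which `g` does not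
depend. -/
theorem msum_update_indep {T : Finset ι} {g : (∀ i, val i) → ℝ} {ω : ∀ i, val i} {i : ι}
    (hiT : i ∉ T) (hg : ∀ ω₁ ω₂, (∀ j, j ≠ i → ω₁ j = ω₂ j) → g ω₁ = g ω₂) (v : val i) :
    msum T g (Function.update ω i v) = msum T g ω := by
  classical
  unfold msum
  have e : Function.Involutive
      (fun σ : ∀ i, val i => Function.update σ i (Equiv.swap v (ω i) (σ i))) := by
    intro σ
    funext j
    by_cases hj : j = i
    · subst hj
      simp [Function.update_self, Equiv.swap_apply_self]
    · simp [Function.update, hj]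
  calc ∑ ω' : ∀ i, val i, (if ∀ j ∉ T, ω' j = Function.update ω i v j then g ω' else 0)
      = ∑ ω' : ∀ i, val i,
          (if ∀ j ∉ T, (Function.update ω' i (Equiv.swap v (ω i) (ω' i))) j
              = Function.update ω i v j
           then g (Function.update ω' i (Equiv.swap v (ω i) (ω' i))) else 0) := by
        exact (Equiv.sum_comp (Function.Involutive.toPerm _ e)
          (fun ω' => if ∀ j ∉ T, ω' j = Function.update ω i v j then g ω' else 0)).symm
    _ = ∑ ω' : ∀ i, val i, (if ∀ j ∉ T, ω' j = ω j then g ω' else 0) := by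
        refine Finset.sum_congr rfl fun ω' _ => ?_
        have hcond : (∀ j ∉ T, (Function.update ω' i (Equiv.swap v (ω i) (ω' i))) j
            = Function.update ω i v j) ↔ (∀ j ∉ T, ω' j = ω j) := by
          constructor <;> intro h j hj
          · by_cases hji : j = i
            · subst hji
              have := h j hj
              simp only [Function.update_self] at this
              have : ω' j = Equiv.swap v (ω j) v := by
                have := (Equiv.apply_eq_iff_eq_symm_apply _).1 this
                simpa [Equiv.symm_swap] using this
              simpa [Equiv.swap_apply_left] using this
            · have := h j hj
              simpa [Function.update, hji] using this
          · by_cases hji : j = i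
            · subst hji
              simp [Function.update_self, h j hj, Equiv.swap_apply_right]
            · simp [Function.update, hji, h j hj]
        by_cases hc : ∀ j ∉ T, ω' j = ω j
        · have hgv : g (Function.update ω' i (Equiv.swap v (ω i) (ω' i))) = g ω' := by
            refine hg _ _ fun j hj => ?_
            simp [Function.update, hj]
          simp [hcond, hc, hgv]
        · simp [hcond, hc]

/-- `msum` over `T` is invariant under changing the base on a set `S` disjoint from `T`,
provided `g` does not depend on coordinates in `S`. -/
theorem msum_indep {S T : Finset ι} (hST : Disjoint S T) {g : (∀ i, val i) → ℝ}
    (hg : ∀ ω₁ ω₂, (∀ j ∉ S, ω₁ j = ω₂ j) → g ω₁ = g ω₂) :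
    ∀ {ω ω₁ : ∀ i, val i}, (∀ j ∉ S, ω₁ j = ω j) → msum T g ω₁ = msum T g ω := by
  classical
  induction S using Finset.induction_on with
  | empty =>
    intro ω ω₁ h
    have : ω₁ = ω := funext fun j => h j (Finset.notMem_empty j)
    rw [this]
  | @insert i S hiS IH =>
    intro ω ω₁ h
    have hiT : i ∉ T := Finset.disjoint_left.1 hST (Finset.mem_insert_self i S)
    have hST' : Disjoint S T := Finset.disjoint_of_subset_left (Finset.subset_insert i S) hST
    have hgi : ∀ ω₁ ω₂, (∀ j, j ≠ i → ω₁ j = ω₂ j) → g ω₁ = g ω₂ := by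
      intro ω₁ ω₂ hh
      refine hg ω₁ ω₂ fun j hj => hh j fun he => hj (he ▸ Finset.mem_insert_self i S)
    have hgS : ∀ ω₁ ω₂, (∀ j ∉ S, ω₁ j = ω₂ j) → g ω₁ = g ω₂ := by
      intro ω₁ ω₂ hh
      refine hg ω₁ ω₂ fun j hj => hh j fun hc => hj (Finset.mem_insert_of_mem hc)
    have step : msum T g ω₁ = msum T g (Function.update ω₁ i (ω i)) :=
      (msum_update_indep hiT hgi (ω i)).symm
    rw [step]
    refine IH hST' hgS ?_
    intro j hj
    by_cases hji : j = i
    · subst hji; simp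
    · have : j ∉ insert i S := by simp [hji, hj]
      simp [Function.update, hji, h j this]

/-- In a finite acyclic graph, every nonempty set has a minimal element (no parent in the
set). -/
theorem exists_no_parent {E : ι → ι → Prop} (hacyc : Acyclic E) (S : Finset ι)
    (hS : S.Nonempty) : ∃ j ∈ S, ∀ p ∈ S, ¬ E p j := by
  classical
  obtain ⟨n, hn⟩ : ∃ n, S.card = n := ⟨S.card, rfl⟩
  induction n using Nat.strong_induction_on generalizing S with
  | _ n IH =>
    obtain ⟨a, ha⟩ := hS
    set S' := S.filter (fun b => Relation.TransGen E b a) with hS'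
    by_cases hne : S'.Nonempty
    · have haS' : a ∉ S' := by
        simp only [hS', Finset.mem_filter]
        rintro ⟨-, hc⟩
        exact hacyc a hc
      have hcard : S'.card < n := by
        rw [← hn]
        exact Finset.card_lt_card (Finset.ssubset_iff_of_subset (Finset.filter_subset _ _)
          |>.2 ⟨a, ha, haS'⟩)
      obtain ⟨j, hjS', hj⟩ := IH S'.card hcard S' hne rfl
      refine ⟨j, Finset.mem_of_mem_filter j hjS', fun p hp hEpj => ?_⟩
      have hpS' : p ∈ S' := by
        simp only [hS', Finset.mem_filter]
        exact ⟨hp, Relation.TransGen.head hEpj (Finset.mem_filter.1 hjS').2⟩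
      exact hj p hpS' hEpj
    · refine ⟨a, ha, fun p hp hEpa => ?_⟩
      exact hne ⟨p, by simp [hS', Finset.mem_filter, hp, Relation.TransGen.single hEpa]⟩

/-- Telescoping: summing the product of conditional tables over its own coordinates gives 1. -/
theorem msum_prod_eq_one {E : ι → ι → Prop} (hacyc : Acyclic E)
    {θ : ι → (∀ i, val i) → ℝ}
    (hθloc : ∀ i ω ω', (∀ j, (j = i ∨ E j i) → ω j = ω' j) → θ i ω = θ i ω')
    (hθnorm : ∀ i ω, ∑ v : val i, θ i (Function.update ω i v) = 1) :
    ∀ (S : Finset ι) (ω : ∀ i, val i), msum S (fun ω' => ∏ i ∈ S, θ i ω') ω = 1 := by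
  classical
  intro S
  obtain ⟨n, hn⟩ : ∃ n, S.card = n := ⟨S.card, rfl⟩
  induction n using Nat.strong_induction_on generalizing S with
  | _ n IH =>
    intro ω
    rcases Finset.eq_empty_or_nonempty S with rfl | hS
    · simp [msum_empty]
    obtain ⟨j, hjS, hj⟩ := exists_no_parent hacyc S hS
    rw [msum_eq_sum_update hjS]
    have key : ∀ v : val j, msum (S.erase j) (fun ω' => ∏ i ∈ S, θ i ω')
        (Function.update ω j v) = θ j (Function.update ω j v) := by
      intro v
      have hsplit : ∀ ω' : ∀ i, val i, (∀ k ∉ S.erase j, ω' k = Function.update ω j v k) →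
          (∏ i ∈ S, θ i ω') = θ j (Function.update ω j v) * ∏ i ∈ S.erase j, θ i ω' := by
        intro ω' hω'
        have hθj : θ j ω' = θ j (Function.update ω j v) := by
          refine hθloc j ω' _ fun k hk => ?_
          have hkS : k ∉ S.erase j := by
            rcases hk with rfl | hEk
            · exact Finset.notMem_erase k S
            · intro hc
              exact hj k (Finset.mem_of_mem_erase hc) hEk
          exact hω' k hkS
        rw [← Finset.prod_erase_mul S _ hjS, hθj, mul_comm]
      calc msum (S.erase j) (fun ω' => ∏ i ∈ S, θ i ω') (Function.update ω j v)
          = msum (S.erase j)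
              (fun ω' => θ j (Function.update ω j v) * ∏ i ∈ S.erase j, θ i ω')
              (Function.update ω j v) := msum_congr hsplit
        _ = θ j (Function.update ω j v) * msum (S.erase j)
              (fun ω' => ∏ i ∈ S.erase j, θ i ω') (Function.update ω j v) := msum_const_mul _
        _ = θ j (Function.update ω j v) * 1 := by
            rw [IH (S.erase j).card (by rw [← hn]; exact Finset.card_erase_lt_of_mem hjS)
              (S.erase j) rfl]
        _ = θ j (Function.update ω j v) := mul_one _
    simp only [key]
    exact hθnorm j ω


theorem prod_indep {E : ι → ι → Prop} {θ : ι → (∀ i, val i) → ℝ}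
    (hθloc : ∀ i ω ω', (∀ j, (j = i ∨ E j i) → ω j = ω' j) → θ i ω = θ i ω')
    (S T : Finset ι) (h : ∀ i ∈ S, i ∉ T ∧ ∀ j, E j i → j ∉ T)
    (ω₁ ω₂ : ∀ i, val i) (hω : ∀ j ∉ T, ω₁ j = ω₂ j) :
    ∏ i ∈ S, θ i ω₁ = ∏ i ∈ S, θ i ω₂ := by
  refine Finset.prod_congr rfl fun i hi => ?_
  refine hθloc i ω₁ ω₂ fun j hj => ?_
  rcases hj with rfl | hj
  · exact hω j (h j hi).1
  · exact hω j ((h i hi).2 j hj)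

theorem marg_Pdo_eq {θ : ι → (∀ i, val i) → ℝ} (T S : Finset ι)
    (t ω τ : ∀ i, val i) (hτT : ∀ i ∈ T, τ i = t i) (hτS : ∀ i ∈ S, τ i = ω i) :
    marg (Pdo θ T t) S ω = msum ((T ∪ S)ᶜ) (fun ω' => ∏ i ∈ Tᶜ, θ i ω') τ := by
  unfold marg msum Pdo
  refine Finset.sum_congr rfl fun ω' _ => ?_
  have hcond : (∀ j ∉ (T ∪ S)ᶜ, ω' j = τ j) ↔
      ((∀ i ∈ S, ω' i = ω i) ∧ (∀ i ∈ T, ω' i = t i)) := by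
    constructor
    · intro h
      constructor
      · intro i hi
        rw [h i (by simp [Finset.mem_compl, hi]), hτS i hi]
      · intro i hi
        rw [h i (by simp [Finset.mem_compl, hi]), hτT i hi]
    · rintro ⟨h1, h2⟩ j hj
      rw [Finset.notMem_compl] at hj
      rcases Finset.mem_union.1 hj with hj | hj
      · rw [h2 j hj, hτT j hj]
      · rw [h1 j hj, hτS j hj]
  rw [if_congr hcond rfl rfl]
  by_cases h1 : ∀ i ∈ S, ω' i = ω i
  · by_cases h2 : ∀ i ∈ T, ω' i = t i
    · rw [if_pos h1, if_pos h2, if_pos ⟨h1, h2⟩]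
    · rw [if_pos h1, if_neg h2, if_neg (fun h => h2 h.2)]
  · rw [if_neg h1, if_neg (fun h => h1 h.1)]

end MsumAux

/-- Specialized Rule 2 (action/observation exchange): if `Z` is backward-t-separated from
`Y` by `X` in the DAG `G`, then `P(Y ∣ do(X = x), do(Z = z)) = P(Y ∣ do(X = x), Z = z)`
for all values `x`, `z` for which the conditioning event has positive probability. -/
theorem do_calculus_rule2 (E : ι → ι → Prop) (hacyc : Acyclic E)
    (θ : ι → (∀ i, val i) → ℝ)
    (hθpos : ∀ i ω, 0 < θ i ω)
    (hθloc : ∀ i ω ω', (∀ j, (j = i ∨ E j i) → ω j = ω' j) → θ i ω = θ i ω')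
    (hθnorm : ∀ i ω, ∑ v : val i, θ i (Function.update ω i v) = 1)
    (X Z Y : Finset ι) (hXZ : Disjoint X Z) (hXY : Disjoint X Y) (hZY : Disjoint Z Y)
    (hsep : BwdTSep E (↑Z) (↑Y) (↑X)) :
    ∀ (x z ω : ∀ i, val i), (∀ i ∈ Z, ω i = z i) →
      0 < marg (Pdo θ X x) Z ω →
      marg (Pdo θ (X ∪ Z) (fun i => if i ∈ Z then z i else x i)) Y ω
        = pcond (Pdo θ X x) Y Z ω := by
  classical
  intro x z ω hωz hpos
  -- the reference assignment
  set τ : ∀ i, val i := fun i => if i ∈ X then x i else if i ∈ Z then z i else ω i with hτdef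
  have hτX : ∀ i ∈ X, τ i = x i := fun i hi => by simp [hτdef, hi]
  have hτZ : ∀ i ∈ Z, τ i = ω i := fun i hi => by
    have hiX : i ∉ X := Finset.disjoint_right.1 hXZ hi
    simp [hτdef, hi, hiX, hωz i hi]
  have hτY : ∀ i ∈ Y, τ i = ω i := fun i hi => by
    have hiX : i ∉ X := Finset.disjoint_right.1 hXY hi
    have hiZ : i ∉ Z := Finset.disjoint_right.1 hZY hi
    simp [hτdef, hiX, hiZ]
  -- the ancestor sets
  set A : Finset ι :=
    univ.filter (fun v => v ∉ Z ∧ ∃ u ∈ Z, Relation.ReflTransGen (EXrel E X) v u) with hAdef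
  set BY : Finset ι :=
    univ.filter (fun v => ∃ w ∈ Y, Relation.ReflTransGen (EXZrel E X Z) v w) with hBYdef
  set F : Finset ι := (X ∪ Z)ᶜ with hFdef
  set B0 : Finset ι := F \ (A ∪ BY) with hB0def
  have hanZ_notX : ∀ v, (∃ u ∈ Z, Relation.ReflTransGen (EXrel E X) v u) → v ∉ X := by
    rintro v ⟨u, hu, hr⟩
    rcases Relation.ReflTransGen.cases_head hr with rfl | ⟨c, hc, -⟩
    · exact Finset.disjoint_right.1 hXZ hu
    · exact hc.2.1
  have hanY_not : ∀ v, (∃ w ∈ Y, Relation.ReflTransGen (EXZrel E X Z) v w) →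
      v ∉ X ∧ v ∉ Z := by
    rintro v ⟨w, hw, hr⟩
    rcases Relation.ReflTransGen.cases_head hr with rfl | ⟨c, hc, -⟩
    · exact ⟨Finset.disjoint_right.1 hXY hw, Finset.disjoint_right.1 hZY hw⟩
    · exact ⟨hc.2.1, hc.2.2.1⟩
  have hAmem : ∀ v, v ∈ A → v ∉ X ∧ v ∉ Z := by
    intro v hv
    simp only [hAdef, Finset.mem_filter, Finset.mem_univ, true_and] at hv
    exact ⟨hanZ_notX v hv.2, hv.1⟩
  have hBYmem : ∀ v, v ∈ BY → v ∉ X ∧ v ∉ Z := by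
    intro v hv
    simp only [hBYdef, Finset.mem_filter, Finset.mem_univ, true_and] at hv
    exact hanY_not v hv
  have hABY : ∀ v, v ∈ A → v ∈ BY → False := by
    intro v hvA hvBY
    simp only [hAdef, hBYdef, Finset.mem_filter, Finset.mem_univ, true_and] at hvA hvBY
    exact anZ_anY_disjoint hXY hXZ hZY hsep v hvA.1 hvA.2 hvBY
  have hYBY : ∀ v, v ∈ Y → v ∈ BY := by
    intro v hv
    simp only [hBYdef, Finset.mem_filter, Finset.mem_univ, true_and]
    exact ⟨v, hv, Relation.ReflTransGen.refl⟩
  have hparZA : ∀ i, (i ∈ Z ∨ i ∈ A) → ∀ j, E j i → j ∉ X → (j ∈ Z ∨ j ∈ A) := by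
    intro i hi j hji hjX
    by_cases hjZ : j ∈ Z
    · exact Or.inl hjZ
    right
    simp only [hAdef, Finset.mem_filter, Finset.mem_univ, true_and]
    refine ⟨hjZ, ?_⟩
    rcases hi with hiZ | hiA
    · exact ⟨i, hiZ, Relation.ReflTransGen.single
        ⟨hji, hjX, Finset.disjoint_right.1 hXZ hiZ⟩⟩
    · simp only [hAdef, Finset.mem_filter, Finset.mem_univ, true_and] at hiA
      obtain ⟨hiZ', u, hu, hr⟩ := hiA
      have hiX : i ∉ X := hanZ_notX i ⟨u, hu, hr⟩
      exact ⟨u, hu, Relation.ReflTransGen.head ⟨hji, hjX, hiX⟩ hr⟩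
  have hparBY : ∀ i, i ∈ BY → ∀ j, E j i → j ∉ X → (j ∈ Z ∨ j ∈ BY) := by
    intro i hi j hji hjX
    by_cases hjZ : j ∈ Z
    · exact Or.inl hjZ
    right
    simp only [hBYdef, Finset.mem_filter, Finset.mem_univ, true_and] at hi ⊢
    obtain ⟨w, hw, hr⟩ := hi
    have hi2 := hanY_not i ⟨w, hw, hr⟩
    exact ⟨w, hw, Relation.ReflTransGen.head ⟨hji, hjX, hjZ, hi2.1, hi2.2⟩ hr⟩
  -- membership characterizations
  have hFmem : ∀ v, v ∈ F ↔ (v ∉ X ∧ v ∉ Z) := by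
    intro v; simp [hFdef]
  have hB0mem : ∀ v, v ∈ B0 ↔ (v ∈ F ∧ v ∉ A ∧ v ∉ BY) := by
    intro v
    rw [hB0def, Finset.mem_sdiff, Finset.mem_union]
    tauto
  have hAF : ∀ v, v ∈ A → v ∈ F := fun v hv => (hFmem v).2 (hAmem v hv)
  have hBYF : ∀ v, v ∈ BY → v ∈ F := fun v hv => (hFmem v).2 (hBYmem v hv)
  have hB0F : ∀ v, v ∈ B0 → v ∈ F := fun v hv => ((hB0mem v).1 hv).1
  -- disjointness and decompositions
  have hdA_BYB0 : Disjoint A (BY ∪ B0) := by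
    rw [Finset.disjoint_left]
    intro v hvA hv
    rcases Finset.mem_union.1 hv with hv | hv
    · exact hABY v hvA hv
    · exact ((hB0mem v).1 hv).2.1 hvA
  have hdBY_B0 : Disjoint BY B0 := by
    rw [Finset.disjoint_left]
    intro v hv1 hv2
    exact ((hB0mem v).1 hv2).2.2 hv1
  have hdZA_BYB0 : Disjoint (Z ∪ A) (BY ∪ B0) := by
    rw [Finset.disjoint_left]
    intro v hv1 hv2
    have hvF : v ∈ F := by
      rcases Finset.mem_union.1 hv2 with h | h
      · exact hBYF v h
      · exact hB0F v h
    rcases Finset.mem_union.1 hv1 with h | h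
    · exact ((hFmem v).1 hvF).2 h
    · exact Finset.disjoint_left.1 hdA_BYB0 h hv2
  have hdBYY_AB0 : Disjoint (BY \ Y) (A ∪ B0) := by
    rw [Finset.disjoint_left]
    intro v hv1 hv2
    have hv1' := Finset.mem_sdiff.1 hv1
    rcases Finset.mem_union.1 hv2 with h | h
    · exact hABY v h hv1'.1
    · exact ((hB0mem v).1 h).2.2 hv1'.1
  have hdA_BYYB0 : Disjoint A ((BY \ Y) ∪ B0) := by
    rw [Finset.disjoint_left]
    intro v hv1 hv2
    rcases Finset.mem_union.1 hv2 with h | h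
    · exact hABY v hv1 (Finset.mem_sdiff.1 h).1
    · exact ((hB0mem v).1 h).2.1 hv1
  have hdBYY_B0 : Disjoint (BY \ Y) B0 := by
    rw [Finset.disjoint_left]
    intro v hv1 hv2
    exact ((hB0mem v).1 hv2).2.2 (Finset.mem_sdiff.1 hv1).1
  have hdA_BYY : Disjoint A (BY \ Y) := by
    rw [Finset.disjoint_left]
    intro v hv1 hv2
    exact hABY v hv1 (Finset.mem_sdiff.1 hv2).1
  have hXc : Xᶜ = (Z ∪ A) ∪ (BY ∪ B0) := by
    ext v
    have h1 := hAmem v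
    have h2 := hBYmem v
    have h3 := hB0mem v
    have h4 := hFmem v
    simp only [Finset.mem_compl, Finset.mem_union] at *
    constructor
    · intro hvX
      by_cases hvZ : v ∈ Z
      · exact Or.inl (Or.inl hvZ)
      by_cases hvA : v ∈ A
      · exact Or.inl (Or.inr hvA)
      by_cases hvBY : v ∈ BY
      · exact Or.inr (Or.inl hvBY)
      · exact Or.inr (Or.inr (h3.2 ⟨h4.2 ⟨hvX, hvZ⟩, hvA, hvBY⟩))
    · rintro ((h | h) | (h | h))
      · exact Finset.disjoint_right.1 hXZ h
      · exact (h1 h).1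
      · exact (h2 h).1
      · exact (h4.1 (h3.1 h).1).1
  have hFeq : F = A ∪ (BY ∪ B0) := by
    ext v
    have h1 := hAmem v
    have h2 := hBYmem v
    have h3 := hB0mem v
    have h4 := hFmem v
    simp only [Finset.mem_union] at *
    constructor
    · intro hvF
      by_cases hvA : v ∈ A
      · exact Or.inl hvA
      by_cases hvBY : v ∈ BY
      · exact Or.inr (Or.inl hvBY)
      · exact Or.inr (Or.inr (h3.2 ⟨hvF, hvA, hvBY⟩))
    · rintro (h | (h | h))
      · exact h4.2 (h1 h)
      · exact h4.2 (h2 h)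
      · exact (h3.1 h).1
  have hYF : ∀ v, v ∈ Y → v ∈ F := fun v hv => hBYF v (hYBY v hv)
  have hFYeq1 : F \ Y = (BY \ Y) ∪ (A ∪ B0) := by
    ext v
    have h3 := hB0mem v
    have h4 := hFmem v
    have h5 := hYBY v
    have hb := hBYF v
    have ha := hAF v
    have hb0 := hB0F v
    simp only [Finset.mem_sdiff, Finset.mem_union] at *
    constructor
    · rintro ⟨hvF, hvY⟩
      by_cases hvBY : v ∈ BY
      · exact Or.inl ⟨hvBY, hvY⟩
      by_cases hvA : v ∈ A
      · exact Or.inr (Or.inl hvA)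
      · exact Or.inr (Or.inr (h3.2 ⟨hvF, hvA, hvBY⟩))
    · rintro (⟨h, hy⟩ | (h | h))
      · exact ⟨hb h, hy⟩
      · refine ⟨ha h, fun hy => hABY v h (h5 hy)⟩
      · exact ⟨hb0 h, fun hy => (h3.1 h).2.2 (h5 hy)⟩
  have hFYeq2 : F \ Y = A ∪ ((BY \ Y) ∪ B0) := by
    rw [hFYeq1]
    ext v
    simp only [Finset.mem_union, Finset.mem_sdiff]
    tauto
  -- conversion of marginals
  have hc1 : (X ∪ (Y ∪ Z))ᶜ = F \ Y := by
    ext v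
    have h := hYF v
    simp only [Finset.mem_compl, Finset.mem_union, Finset.mem_sdiff, hFmem v] at *
    tauto
  have hc2 : (X ∪ Z ∪ Y)ᶜ = F \ Y := by
    ext v
    simp only [Finset.mem_compl, Finset.mem_union, Finset.mem_sdiff, hFmem v] at *
    tauto
  have conv1 : marg (Pdo θ X x) Z ω = msum F (fun ω' => ∏ i ∈ Xᶜ, θ i ω') τ := by
    rw [marg_Pdo_eq X Z x ω τ hτX hτZ, hFdef]
  have conv2 : marg (Pdo θ X x) (Y ∪ Z) ω = msum (F \ Y) (fun ω' => ∏ i ∈ Xᶜ, θ i ω') τ := by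
    have hτYZ : ∀ i ∈ Y ∪ Z, τ i = ω i := by
      intro i hi
      rcases Finset.mem_union.1 hi with h | h
      · exact hτY i h
      · exact hτZ i h
    rw [marg_Pdo_eq X (Y ∪ Z) x ω τ hτX hτYZ, hc1]
  have conv3 : marg (Pdo θ (X ∪ Z) (fun i => if i ∈ Z then z i else x i)) Y ω
      = msum (F \ Y) (fun ω' => ∏ i ∈ F, θ i ω') τ := by
    have hτXZ : ∀ i ∈ X ∪ Z, τ i = (fun i => if i ∈ Z then z i else x i) i := by
      intro i hi
      by_cases hiZ : i ∈ Z
      · have hiX : i ∉ X := Finset.disjoint_right.1 hXZ hiZ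
        simp [hτdef, hiZ, hiX]
      · rcases Finset.mem_union.1 hi with h | h
        · simp [hτdef, h, hiZ]
        · exact absurd h hiZ
    rw [marg_Pdo_eq (X ∪ Z) Y (fun i => if i ∈ Z then z i else x i) ω τ hτXZ hτY, hc2,
      hFdef]
  -- independence facts
  have hindep_ZA : ∀ (T : Finset ι), (∀ v ∈ T, v ∈ F) → (∀ v, v ∈ A → v ∉ T) →
      ∀ ω₁ ω₂ : ∀ i, val i, (∀ j ∉ T, ω₁ j = ω₂ j) →
        ∏ i ∈ Z ∪ A, θ i ω₁ = ∏ i ∈ Z ∪ A, θ i ω₂ := by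
    intro T hTF hTA
    refine prod_indep (E := E) hθloc (Z ∪ A) T ?_
    intro i hi
    have hi' := Finset.mem_union.1 hi
    constructor
    · intro hiT
      have hiF := hTF i hiT
      rcases hi' with h | h
      · exact ((hFmem i).1 hiF).2 h
      · exact hTA i h hiT
    · intro j hji hjT
      have hjF := hTF j hjT
      have hjX : j ∉ X := ((hFmem j).1 hjF).1
      rcases hparZA i hi' j hji hjX with h | h
      · exact ((hFmem j).1 hjF).2 h
      · exact hTA j h hjT
  have hindep_BY : ∀ (T : Finset ι), (∀ v ∈ T, v ∈ F) → (∀ v, v ∈ BY → v ∉ T) →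
      ∀ ω₁ ω₂ : ∀ i, val i, (∀ j ∉ T, ω₁ j = ω₂ j) →
        ∏ i ∈ BY, θ i ω₁ = ∏ i ∈ BY, θ i ω₂ := by
    intro T hTF hTBY
    refine prod_indep (E := E) hθloc BY T ?_
    intro i hi
    constructor
    · exact fun hiT => hTBY i hi hiT
    · intro j hji hjT
      have hjF := hTF j hjT
      have hjX : j ∉ X := ((hFmem j).1 hjF).1
      rcases hparBY i hi j hji hjX with h | h
      · exact ((hFmem j).1 hjF).2 h
      · exact hTBY j h hjT
  have hi1 := hindep_ZA (BY ∪ B0)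
    (fun v hv => by rcases Finset.mem_union.1 hv with h | h; exacts [hBYF v h, hB0F v h])
    (fun v hv => Finset.disjoint_left.1 hdA_BYB0 hv)
  have hi2 := hindep_ZA ((BY \ Y) ∪ B0)
    (fun v hv => by
      rcases Finset.mem_union.1 hv with h | h
      exacts [hBYF v (Finset.mem_sdiff.1 h).1, hB0F v h])
    (fun v hv => Finset.disjoint_left.1 hdA_BYYB0 hv)
  have hi3 := hindep_BY (A ∪ B0)
    (fun v hv => by rcases Finset.mem_union.1 hv with h | h; exacts [hAF v h, hB0F v h])
    (fun v hv hv2 => by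
      rcases Finset.mem_union.1 hv2 with h | h
      · exact hABY v h hv
      · exact ((hB0mem v).1 h).2.2 hv)
  have hi4 := hindep_BY B0 (fun v hv => hB0F v hv)
    (fun v hv hv2 => ((hB0mem v).1 hv2).2.2 hv)
  have hi5 := hindep_BY A (fun v hv => hAF v hv) (fun v hv hv2 => hABY v hv2 hv)
  -- the three computations
  have hone := msum_prod_eq_one (val := val) hacyc hθloc hθnorm
  have hC2 : msum F (fun ω' => ∏ i ∈ Xᶜ, θ i ω') τ
      = msum A (fun ω' => ∏ i ∈ Z ∪ A, θ i ω') τ := by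
    rw [hFeq, msum_union hdA_BYB0]
    refine msum_congr fun ω₁ hω₁ => ?_
    have step1 : msum (BY ∪ B0) (fun ω' => ∏ i ∈ Xᶜ, θ i ω') ω₁
        = (∏ i ∈ Z ∪ A, θ i ω₁) * msum (BY ∪ B0) (fun ω' => ∏ i ∈ BY ∪ B0, θ i ω') ω₁ := by
      rw [← msum_const_mul]
      refine msum_congr fun ω' hω' => ?_
      rw [hXc, Finset.prod_union hdZA_BYB0, hi1 ω' ω₁ hω']
    rw [step1, hone, mul_one]
  have hC1 : msum (F \ Y) (fun ω' => ∏ i ∈ F, θ i ω') τ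
      = msum (BY \ Y) (fun ω' => ∏ i ∈ BY, θ i ω') τ := by
    rw [hFYeq1, msum_union hdBYY_AB0]
    refine msum_congr fun ω₁ hω₁ => ?_
    have hFeq2 : F = BY ∪ (A ∪ B0) := by
      rw [hFeq]
      ext v
      simp only [Finset.mem_union]
      tauto
    have hdBY_AB0 : Disjoint BY (A ∪ B0) := by
      rw [Finset.disjoint_left]
      intro v hv1 hv2
      rcases Finset.mem_union.1 hv2 with h | h
      · exact hABY v h hv1
      · exact ((hB0mem v).1 h).2.2 hv1
    have step1 : msum (A ∪ B0) (fun ω' => ∏ i ∈ F, θ i ω') ω₁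
        = (∏ i ∈ BY, θ i ω₁) * msum (A ∪ B0) (fun ω' => ∏ i ∈ A ∪ B0, θ i ω') ω₁ := by
      rw [← msum_const_mul]
      refine msum_congr fun ω' hω' => ?_
      rw [hFeq2, Finset.prod_union hdBY_AB0, hi3 ω' ω₁ hω']
    rw [step1, hone, mul_one]
  have hC3 : msum (F \ Y) (fun ω' => ∏ i ∈ Xᶜ, θ i ω') τ
      = msum A (fun ω' => ∏ i ∈ Z ∪ A, θ i ω') τ
        * msum (BY \ Y) (fun ω' => ∏ i ∈ BY, θ i ω') τ := by
    rw [hFYeq2, msum_union hdA_BYYB0]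
    have H : ∀ ω₁ : ∀ i, val i, (∀ j ∉ A, ω₁ j = τ j) →
        msum ((BY \ Y) ∪ B0) (fun ω' => ∏ i ∈ Xᶜ, θ i ω') ω₁
          = (∏ i ∈ Z ∪ A, θ i ω₁) * msum (BY \ Y) (fun ω' => ∏ i ∈ BY, θ i ω') τ := by
      intro ω₁ hω₁
      have e1 : msum ((BY \ Y) ∪ B0) (fun ω' => ∏ i ∈ Xᶜ, θ i ω') ω₁
          = (∏ i ∈ Z ∪ A, θ i ω₁)
            * msum ((BY \ Y) ∪ B0) (fun ω' => (∏ i ∈ BY, θ i ω') * ∏ i ∈ B0, θ i ω') ω₁ := by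
        rw [← msum_const_mul]
        refine msum_congr fun ω' hω' => ?_
        rw [hXc, Finset.prod_union hdZA_BYB0, Finset.prod_union hdBY_B0, hi2 ω' ω₁ hω']
      have e2 : msum ((BY \ Y) ∪ B0)
          (fun ω' => (∏ i ∈ BY, θ i ω') * ∏ i ∈ B0, θ i ω') ω₁
          = msum (BY \ Y) (fun ω' => ∏ i ∈ BY, θ i ω') ω₁ := by
        rw [msum_union hdBYY_B0]
        refine msum_congr fun ω₂ hω₂ => ?_
        have e2' : msum B0 (fun ω' => (∏ i ∈ BY, θ i ω') * ∏ i ∈ B0, θ i ω') ω₂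
            = (∏ i ∈ BY, θ i ω₂) * msum B0 (fun ω' => ∏ i ∈ B0, θ i ω') ω₂ := by
          rw [← msum_const_mul]
          refine msum_congr fun ω' hω' => ?_
          rw [hi4 ω' ω₂ hω']
        rw [e2', hone, mul_one]
      have e3 : msum (BY \ Y) (fun ω' => ∏ i ∈ BY, θ i ω') ω₁
          = msum (BY \ Y) (fun ω' => ∏ i ∈ BY, θ i ω') τ :=
        msum_indep hdA_BYY (hi5) hω₁
      rw [e1, e2, e3]
    calc msum A (fun ω₁ => msum ((BY \ Y) ∪ B0) (fun ω' => ∏ i ∈ Xᶜ, θ i ω') ω₁) τ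
        = msum A (fun ω₁ => (∏ i ∈ Z ∪ A, θ i ω₁)
            * msum (BY \ Y) (fun ω' => ∏ i ∈ BY, θ i ω') τ) τ := msum_congr H
      _ = msum A (fun ω₁ => ∏ i ∈ Z ∪ A, θ i ω₁) τ
            * msum (BY \ Y) (fun ω' => ∏ i ∈ BY, θ i ω') τ := msum_mul_const _
  -- put everything together
  rw [conv1, hC2] at hpos
  rw [conv3, hC1]
  unfold pcond
  rw [conv2, conv1, hC3, hC2, mul_div_cancel_left₀ _ (ne_of_gt hpos)]
end

section
/- In the category FinStoch of finite sets and stochastic matrices, every morphism f : Z → X ⊗ Y admits a conditional over X: there exists f_{Y|XZ} : X ⊗ Z → Y such that f = (1_X ⊗ f_{Y|XZ}) ∘ (δ_X ⊗ 1_Z) ∘ (f_{X|Z} ⊗ 1_Z) ∘ δ_Z, where f_{X|Z} = (1_X ⊗ ε_Y) ∘ f is the marginal. -/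
open Finset

section NormalizedOrUniform

variable {ι : Type*} [Fintype ι]

noncomputable def normalizedOrUniform (w : ι → ℝ) (i : ι) : ℝ :=
  if ∑ j, w j = 0 then (Fintype.card ι : ℝ)⁻¹ else w i / ∑ j, w j

theorem normalizedOrUniform_nonneg {w : ι → ℝ} (hw : ∀ i, 0 ≤ w i) (i : ι) :
    0 ≤ normalizedOrUniform w i := by
  unfold normalizedOrUniform
  split_ifs
  · positivity
  · exact div_nonneg (hw i) (sum_nonneg fun j _ => hw j)

theorem sum_normalizedOrUniform [Nonempty ι] (w : ι → ℝ) :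
    ∑ i, normalizedOrUniform w i = 1 := by
  unfold normalizedOrUniform
  split_ifs with h
  · rw [sum_const, card_univ, nsmul_eq_mul, mul_inv_cancel₀ (by positivity)]
  · rw [← sum_div, div_self h]

theorem sum_mul_normalizedOrUniform {w : ι → ℝ} (hw : ∀ i, 0 ≤ w i) (i : ι) :
    (∑ j, w j) * normalizedOrUniform w i = w i := by
  unfold normalizedOrUniform
  split_ifs with h
  · have hwi : w i = 0 := (sum_eq_zero_iff_of_nonneg fun j _ => hw j).mp h i (mem_univ i)
    rw [h, hwi, zero_mul]
  · exact mul_div_cancel₀ _ h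

end NormalizedOrUniform

/-- In `FinStoch`, every morphism `f : Z → X ⊗ Y` (a stochastic matrix
`f(x,y ∣ z)`) admits a conditional over `X`: there is a stochastic matrix
`g(y ∣ x,z)` with `f(x,y ∣ z) = (∑_{y'} f(x,y' ∣ z)) · g(y ∣ x,z)` for all `x`, `y`, `z`,
i.e. `f = (1_X ⊗ f_{Y|XZ}) ∘ (δ_X ⊗ 1_Z) ∘ (f_{X|Z} ⊗ 1_Z) ∘ δ_Z`. -/
theorem finStoch_conditionals_exist {X Y Z : Type*} [Fintype X] [Fintype Y] [Fintype Z]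
    (f : Z → X × Y → ℝ) (hnn : ∀ z p, 0 ≤ f z p) (hsum : ∀ z, ∑ p, f z p = 1) :
    ∃ g : X × Z → Y → ℝ,
      (∀ q y, 0 ≤ g q y) ∧ (∀ q, ∑ y, g q y = 1) ∧
      ∀ (x : X) (y : Y) (z : Z), f z (x, y) = (∑ y', f z (x, y')) * g (x, z) y := by
  refine ⟨fun q => normalizedOrUniform fun y => f q.2 (q.1, y),
    fun q => normalizedOrUniform_nonneg fun _ => hnn _ _, fun q => ?_,
    fun x y z => (sum_mul_normalizedOrUniform (fun _ => hnn _ _) y).symm⟩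
  obtain ⟨p, -, -⟩ := exists_ne_zero_of_sum_ne_zero ((hsum q.2).symm ▸ one_ne_zero)
  have : Nonempty Y := ⟨p.2⟩
  exact sum_normalizedOrUniform _
end
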